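/- arXiv:1205.1933 — 7 statements merged into one kernel-verified Lean document; each statement's English description precedes it below -/
import Mathlib

section
/- Let X_n be the n×n matrix with X[i][1] = x_i for all i, X[i][i+1] = i for 1 ≤ i ≤ n-1, X[i][j] = x_{i-j+1} for j ≤ i, and 0 elsewhere. Define F_n(x) = det(x I_n - X_n), with F_0(x) = 1. Then for n ≥ 1, F_n(x) = (x - x_1) F_{n-1}(x) - ∑_{i=2}^{n} ((n-1)!/(n-i)!) x_i F_{n-i}(x). -/
open Matrix Polynomial PowerSeries

def Xmat (R : Type*) [CommRing R] (n : ℕ) (x : ℕ → R) : Matrix (Fin n) (Fin n) R :=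
  fun i j =>
    if (j : ℕ) ≤ (i : ℕ) then x ((i : ℕ) - (j : ℕ) + 1)
    else if (j : ℕ) = (i : ℕ) + 1 then (((i : ℕ) + 1 : ℕ) : R)
    else 0

lemma Xmat_charmatrix_castSucc (R : Type*) [CommRing R] (x : ℕ → R) (n : ℕ) (i j : Fin n) :
    charmatrix (Xmat R (n + 1) x) i.castSucc j.castSucc = charmatrix (Xmat R n x) i j := by
  by_cases h : i = j
  · subst h
    simp [Xmat]
  · have h' : (i.castSucc : Fin (n + 1)) ≠ j.castSucc := by
      simpa [Fin.castSucc_inj] using h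
    rw [charmatrix_apply_ne _ _ _ h', charmatrix_apply_ne _ _ _ h]
    simp [Xmat]

lemma Xmat_charmatrix_submatrix (R : Type*) [CommRing R] (x : ℕ → R) (n : ℕ) :
    (charmatrix (Xmat R (n + 1) x)).submatrix Fin.castSucc Fin.castSucc
      = charmatrix (Xmat R n x) := by
  funext i j
  exact Xmat_charmatrix_castSucc R x n i j

lemma Xmat_minor_det (R : Type*) [CommRing R] (x : ℕ → R) :
    ∀ n : ℕ, ∀ j : Fin n,
      Matrix.det ((charmatrix (Xmat R (n + 1) x)).submatrix Fin.castSucc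
          (Fin.succAbove j.castSucc)) =
        (-1 : Polynomial R) ^ (n - (j : ℕ)) *
          ((n.factorial / (j : ℕ).factorial : ℕ) : Polynomial R) *
          Matrix.charpoly (Xmat R (j : ℕ) x) := by
  intro n
  induction n with
  | zero => exact fun j => j.elim0
  | succ n ih =>
    intro j
    set A := (charmatrix (Xmat R (n + 2) x)).submatrix Fin.castSucc
      (Fin.succAbove j.castSucc) with hA
    have hsA : (j.castSucc).succAbove (Fin.last n) = Fin.last (n + 1) := by
      rw [Fin.succAbove_of_le_castSucc]
      · rfl
      · simp [Fin.le_def, Fin.is_le]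
    have hcol : ∀ i : Fin (n + 1), i ≠ Fin.last n → A i (Fin.last n) = 0 := by
      intro i hi
      have hiv : (i : ℕ) < n := by
        have h1 := i.isLt
        have h2 : (i : ℕ) ≠ n := fun h => hi (Fin.ext h)
        omega
      have hne : (i.castSucc : Fin (n + 2)) ≠ Fin.last (n + 1) := by
        simp only [ne_eq, Fin.ext_iff, Fin.coe_castSucc, Fin.val_last]
        omega
      rw [hA, Matrix.submatrix_apply, hsA, charmatrix_apply_ne _ _ _ hne]
      simp only [Xmat, Fin.coe_castSucc, Fin.val_last]
      rw [if_neg (by omega), if_neg (by omega)]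
      simp
    rw [Matrix.det_succ_column A (Fin.last n), Finset.sum_eq_single (Fin.last n)]
    · have hne : ((Fin.last n).castSucc : Fin (n + 2)) ≠ Fin.last (n + 1) := by
        simp only [ne_eq, Fin.ext_iff, Fin.coe_castSucc, Fin.val_last]
        omega
      have hentry : A (Fin.last n) (Fin.last n) = -Polynomial.C (((n + 1 : ℕ) : R)) := by
        rw [hA, Matrix.submatrix_apply, hsA, charmatrix_apply_ne _ _ _ hne]
        simp only [Xmat, Fin.coe_castSucc, Fin.val_last]
        rw [if_neg (by omega)]
        simp
      have hsub : A.submatrix (Fin.last n).succAbove (Fin.last n).succAbove =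
          (charmatrix (Xmat R (n + 2) x)).submatrix
            (Fin.castSucc ∘ Fin.castSucc) ((j.castSucc).succAbove ∘ Fin.castSucc) := by
        rw [hA, Fin.succAbove_last, Matrix.submatrix_submatrix]
      rcases Fin.eq_castSucc_or_eq_last j with ⟨j', rfl⟩ | rfl
      · -- j = castSucc j'
        have key : (charmatrix (Xmat R (n + 2) x)).submatrix
              (Fin.castSucc ∘ Fin.castSucc) ((j'.castSucc.castSucc).succAbove ∘ Fin.castSucc) =
            (charmatrix (Xmat R (n + 1) x)).submatrix Fin.castSucc
              (Fin.succAbove j'.castSucc) := by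
          funext i c
          simp only [Matrix.submatrix_apply, Function.comp_apply,
            Fin.castSucc_succAbove_castSucc]
          exact Xmat_charmatrix_castSucc R x (n + 1) i.castSucc ((j'.castSucc).succAbove c)
        rw [hentry, hsub, key, ih j', map_natCast (C : R →+* Polynomial R)]
        have hll : (-1 : Polynomial R) ^ (((Fin.last n : Fin (n + 1)) : ℕ) +
            ((Fin.last n : Fin (n + 1)) : ℕ)) = 1 := by
          rw [Fin.val_last, ← two_mul, pow_mul]
          norm_num
        rw [hll]
        have hj'n : (j' : ℕ) ≤ n := le_of_lt j'.isLt
        have hfac : ((n + 1).factorial / (j' : ℕ).factorial) =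
            (n + 1) * (n.factorial / (j' : ℕ).factorial) := by
          rw [Nat.factorial_succ,
            Nat.mul_div_assoc _ (Nat.factorial_dvd_factorial hj'n)]
        have hpow : (n + 1) - (j' : ℕ) = (n - (j' : ℕ)) + 1 := by omega
        have hcoe : ((j'.castSucc : Fin (n + 1)) : ℕ) = (j' : ℕ) := rfl
        rw [hcoe, hfac, hpow]
        push_cast
        ring
      · -- j = last n
        have key : (charmatrix (Xmat R (n + 2) x)).submatrix
              (Fin.castSucc ∘ Fin.castSucc) (((Fin.last n).castSucc).succAbove ∘ Fin.castSucc) =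
            charmatrix (Xmat R n x) := by
          funext i c
          simp only [Matrix.submatrix_apply, Function.comp_apply]
          rw [Fin.succAbove_castSucc_of_lt _ _ (Fin.castSucc_lt_last c)]
          rw [Xmat_charmatrix_castSucc, Xmat_charmatrix_castSucc]
        rw [hentry, hsub, key, map_natCast (C : R →+* Polynomial R)]
        have hll : (-1 : Polynomial R) ^ (((Fin.last n : Fin (n + 1)) : ℕ) +
            ((Fin.last n : Fin (n + 1)) : ℕ)) = 1 := by
          rw [Fin.val_last, ← two_mul, pow_mul]
          norm_num
        rw [hll]
        have hfac : ((n + 1).factorial / ((Fin.last n : Fin (n + 1)) : ℕ).factorial) = n + 1 := by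
          simp [Fin.val_last, Nat.factorial_succ,
            Nat.mul_div_cancel _ (Nat.factorial_pos n)]
        rw [hfac]
        have : (n + 1) - ((Fin.last n : Fin (n + 1)) : ℕ) = 1 := by simp
        rw [this]
        show _ = _ * _ * Matrix.charpoly (Xmat R ((Fin.last n : Fin (n+1)) : ℕ) x)
        rw [Fin.val_last]
        push_cast
        unfold Matrix.charpoly
        ring
    · intro i _ hi
      rw [hcol i hi, mul_zero, zero_mul]
    · intro h
      exact absurd (Finset.mem_univ _) h

theorem stmt0 (R : Type*) [CommRing R] (x : ℕ → R) (n : ℕ) (hn : 1 ≤ n) :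
    Matrix.charpoly (Xmat R n x) =
      (Polynomial.X - Polynomial.C (x 1)) * Matrix.charpoly (Xmat R (n - 1) x)
        - ∑ i ∈ Finset.Icc 2 n,
            (((n - 1).factorial / (n - i).factorial : ℕ) : Polynomial R) *
              Polynomial.C (x i) * Matrix.charpoly (Xmat R (n - i) x) := by
  obtain ⟨m, rfl⟩ : ∃ m, n = m + 1 := ⟨n - 1, by omega⟩
  rw [Matrix.charpoly, Matrix.det_succ_row (charmatrix (Xmat R (m + 1) x)) (Fin.last m)]
  simp only [Fin.succAbove_last]
  rw [Fin.sum_univ_castSucc]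
  have hlast : (-1 : Polynomial R) ^ (((Fin.last m : Fin (m + 1)) : ℕ) +
        ((Fin.last m : Fin (m + 1)) : ℕ)) *
        (Xmat R (m + 1) x).charmatrix (Fin.last m) (Fin.last m) *
        ((Xmat R (m + 1) x).charmatrix.submatrix Fin.castSucc (Fin.last m).succAbove).det =
      (Polynomial.X - Polynomial.C (x 1)) * (Xmat R m x).charpoly := by
    rw [Fin.succAbove_last, Xmat_charmatrix_submatrix, charmatrix_apply_eq]
    have hdiag : Xmat R (m + 1) x (Fin.last m) (Fin.last m) = x 1 := by
      simp [Xmat]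
    have hs : (-1 : Polynomial R) ^ (((Fin.last m : Fin (m + 1)) : ℕ) +
        ((Fin.last m : Fin (m + 1)) : ℕ)) = 1 := by
      rw [Fin.val_last, ← two_mul, pow_mul]
      norm_num
    rw [hdiag, hs, one_mul, Matrix.charpoly]
  have hterm : ∀ j : Fin m, (-1 : Polynomial R) ^ (((Fin.last m : Fin (m + 1)) : ℕ) +
        ((j.castSucc : Fin (m + 1)) : ℕ)) *
        (Xmat R (m + 1) x).charmatrix (Fin.last m) j.castSucc *
        ((Xmat R (m + 1) x).charmatrix.submatrix Fin.castSucc (j.castSucc).succAbove).det =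
      -(((m.factorial / (j : ℕ).factorial : ℕ) : Polynomial R) *
          Polynomial.C (x (m - (j : ℕ) + 1)) * (Xmat R (j : ℕ) x).charpoly) := by
    intro j
    rw [Xmat_minor_det R x m j]
    have hne : (Fin.last m) ≠ j.castSucc := by
      simp only [ne_eq, Fin.ext_iff, Fin.val_last, Fin.coe_castSucc]
      have := j.isLt
      omega
    rw [charmatrix_apply_ne _ _ _ hne]
    have hXe : Xmat R (m + 1) x (Fin.last m) j.castSucc = x (m - (j : ℕ) + 1) := by
      simp only [Xmat, Fin.val_last, Fin.coe_castSucc]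
      rw [if_pos (le_of_lt j.isLt)]
    rw [hXe]
    have hs : (-1 : Polynomial R) ^ (((Fin.last m : Fin (m + 1)) : ℕ) +
        ((j.castSucc : Fin (m + 1)) : ℕ)) * (-1 : Polynomial R) ^ (m - (j : ℕ)) = 1 := by
      rw [← pow_add, Fin.val_last, Fin.coe_castSucc]
      have h2 : m + (j : ℕ) + (m - (j : ℕ)) = 2 * m := by
        have := j.isLt; omega
      rw [h2, pow_mul]
      norm_num
    linear_combination (-(((m.factorial / (j : ℕ).factorial : ℕ) : Polynomial R) *
      Polynomial.C (x (m - (j : ℕ) + 1)) * (Xmat R (j : ℕ) x).charpoly)) * hs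
  simp only [hterm]
  rw [hlast]
  simp only [Nat.add_sub_cancel]
  have hkey : ∑ j : Fin m, ((m.factorial / (j : ℕ).factorial : ℕ) : Polynomial R) *
        Polynomial.C (x (m - (j : ℕ) + 1)) * (Xmat R (j : ℕ) x).charpoly =
      ∑ i ∈ Finset.Icc 2 (m + 1), ((m.factorial / (m + 1 - i).factorial : ℕ) : Polynomial R) *
        Polynomial.C (x i) * (Xmat R (m + 1 - i) x).charpoly := by
    rw [Fin.sum_univ_eq_sum_range (fun k => ((m.factorial / k.factorial : ℕ) : Polynomial R) *
      Polynomial.C (x (m - k + 1)) * (Xmat R k x).charpoly) m]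
    rw [show Finset.Icc 2 (m + 1) = Finset.Ico 2 (m + 2) by rw [← Finset.Ico_add_one_right_eq_Icc]; rfl]
    rw [Finset.sum_Ico_eq_sum_range]
    have hm : m + 2 - 2 = m := by omega
    rw [hm, ← Finset.sum_range_reflect]
    apply Finset.sum_congr rfl
    intro k hk
    rw [Finset.mem_range] at hk
    have h1 : m - (m - 1 - k) + 1 = 2 + k := by omega
    have h2 : m + 1 - (2 + k) = m - 1 - k := by omega
    rw [h1, h2]
  rw [Finset.sum_neg_distrib, hkey]
  have hm1 : m + 1 - 1 = m := rfl
  rw [hm1]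
  ring
end

section
/- Let X_n be the structured matrix with first column (x_1,…,x_n)^T, superdiagonal 1,2,…,n-1, entries x_{i-j+1} below and on the diagonal, and zeros elsewhere, and let F_n(x) = det(xI_n - X_n). Then (d/dx) F_n(x) = n · F_{n-1}(x). -/
open Matrix Polynomial PowerSeries

variable {R : Type*} [CommRing R] (x : ℕ → R)

noncomputable def Fp (x : ℕ → R) (n : ℕ) : R[X] := (Xmat R n x).charpoly

lemma Xmat_castSucc (m : ℕ) (i j : Fin m) :
    Xmat R (m+1) x i.castSucc j.castSucc = Xmat R m x i j := by
  simp [Xmat]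

lemma charmatrix_Xmat_castSucc (m : ℕ) (i j : Fin m) :
    charmatrix (Xmat R (m+1) x) i.castSucc j.castSucc = charmatrix (Xmat R m x) i j := by
  by_cases h : i = j
  · subst h; rw [charmatrix_apply_eq, charmatrix_apply_eq, Xmat_castSucc]
  · rw [charmatrix_apply_ne _ _ _ (by simpa using h), charmatrix_apply_ne _ _ _ h,
      Xmat_castSucc]

noncomputable def Dmat (x : ℕ → R) (m : ℕ) (j : Fin (m+1)) : Matrix (Fin m) (Fin m) R[X] :=
  (charmatrix (Xmat R (m+1) x)).submatrix Fin.castSucc j.succAbove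

lemma det_Dmat_last (m : ℕ) : (Dmat x m (Fin.last m)).det = Fp x m := by
  have : Dmat x m (Fin.last m) = charmatrix (Xmat R m x) := by
    ext i j
    rw [Dmat, submatrix_apply, Fin.succAbove_last, charmatrix_Xmat_castSucc]
  rw [this, Fp, Matrix.charpoly]


lemma det_Dmat_castSucc (m : ℕ) (j : Fin (m+1)) :
    (Dmat x (m+1) j.castSucc).det = -(((m+1 : ℕ) : R[X])) * (Dmat x m j).det := by
  have hcol : (j.castSucc).succAbove (Fin.last m) = Fin.last (m+1) := by
    rw [Fin.succAbove_of_le_castSucc _ _ (by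
      simp only [Fin.le_def, Fin.coe_castSucc, Fin.val_last]; omega)]
    exact Fin.succ_last m
  rw [det_succ_column (Dmat x (m+1) j.castSucc) (Fin.last m)]
  rw [Finset.sum_eq_single (Fin.last m)]
  · -- main term
    have hne : (Fin.last m).castSucc ≠ Fin.last (m+1) := by
      simp [Fin.ext_iff]
    have hentry : Dmat x (m+1) j.castSucc (Fin.last m) (Fin.last m)
        = -(((m+1 : ℕ) : R[X])) := by
      simp only [Dmat, submatrix_apply, hcol]
      rw [charmatrix_apply_ne _ _ _ hne]
      simp [Xmat]
    have hsub : (Dmat x (m+1) j.castSucc).submatrix (Fin.last m).succAbove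
        (Fin.last m).succAbove = Dmat x m j := by
      ext r c
      simp only [Dmat, submatrix_apply, Fin.succAbove_last,
        Fin.castSucc_succAbove_castSucc, charmatrix_Xmat_castSucc]
    rw [hentry, hsub]
    have : ((Fin.last m : ℕ) + (Fin.last m : ℕ)) = 2 * m := by simp [two_mul]
    rw [this, pow_mul]
    simp
  · intro i _ hi
    have hv : (i : ℕ) ≠ m := by simpa [Fin.ext_iff] using hi
    have hne : i.castSucc ≠ Fin.last (m+1) := (Fin.castSucc_lt_last i).ne
    have : Dmat x (m+1) j.castSucc i (Fin.last m) = 0 := by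
      simp only [Dmat, submatrix_apply, hcol]
      rw [charmatrix_apply_ne _ _ _ hne]
      simp only [Xmat, Fin.coe_castSucc, Fin.val_last]
      rw [if_neg (by omega), if_neg (by omega)]
      simp
    rw [this]; ring
  · intro h; exact absurd (Finset.mem_univ _) h

lemma det_Dmat (m : ℕ) (j : Fin (m+1)) :
    (Dmat x m j).det = (-1 : R[X]) ^ (m - (j : ℕ)) *
      ((Nat.descFactorial m (m - (j : ℕ)) : ℕ) : R[X]) * Fp x (j : ℕ) := by
  induction m with
  | zero =>
    have : j = Fin.last 0 := Fin.ext (by omega)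
    subst this
    rw [det_Dmat_last]
    simp
  | succ m ih =>
    induction j using Fin.lastCases with
    | last =>
      rw [det_Dmat_last]
      simp
    | cast j =>
      rw [det_Dmat_castSucc, ih]
      have h1 : m + 1 - (j : ℕ) = (m - (j : ℕ)) + 1 := by omega
      have h2 : (m+1).descFactorial ((m - (j : ℕ)) + 1)
          = (m+1) * m.descFactorial (m - (j : ℕ)) := Nat.succ_descFactorial_succ m _
      rw [Fin.coe_castSucc, h1, h2]
      push_cast
      ring

lemma Fp_succ (m : ℕ) :
    Fp x (m+1) = (Polynomial.X - Polynomial.C (x 1)) * Fp x m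
      - ∑ j : Fin m, ((Nat.descFactorial m (m - (j : ℕ)) : ℕ) : R[X]) *
          Polynomial.C (x (m - (j : ℕ) + 1)) * Fp x (j : ℕ) := by
  rw [Fp, Matrix.charpoly, det_succ_row _ (Fin.last m)]
  simp only [Fin.succAbove_last]
  have hD : ∀ jj : Fin (m+1),
      (charmatrix (Xmat R (m+1) x)).submatrix Fin.castSucc jj.succAbove = Dmat x m jj :=
    fun _ => rfl
  simp only [hD]
  rw [Fin.sum_univ_castSucc]
  have hlast : (-1 : R[X]) ^ ((Fin.last m : ℕ) + (Fin.last m : ℕ)) *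
      charmatrix (Xmat R (m+1) x) (Fin.last m) (Fin.last m) * (Dmat x m (Fin.last m)).det
      = (Polynomial.X - Polynomial.C (x 1)) * Fp x m := by
    rw [det_Dmat_last, charmatrix_apply_eq]
    have hx : Xmat R (m+1) x (Fin.last m) (Fin.last m) = x 1 := by
      simp [Xmat]
    rw [hx]
    have : ((Fin.last m : ℕ) + (Fin.last m : ℕ)) = 2 * m := by simp [two_mul]
    rw [this, pow_mul]
    simp
  rw [hlast]
  have hterm : ∀ j : Fin m,
      (-1 : R[X]) ^ ((Fin.last m : ℕ) + ((j.castSucc : Fin (m+1)) : ℕ)) *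
        charmatrix (Xmat R (m+1) x) (Fin.last m) j.castSucc * (Dmat x m j.castSucc).det
      = -(((Nat.descFactorial m (m - (j : ℕ)) : ℕ) : R[X]) *
          Polynomial.C (x (m - (j : ℕ) + 1)) * Fp x (j : ℕ)) := by
    intro j
    have hne : Fin.last m ≠ (j.castSucc : Fin (m+1)) := (Fin.castSucc_lt_last j).ne'
    rw [charmatrix_apply_ne _ _ _ hne, det_Dmat]
    have hx : Xmat R (m+1) x (Fin.last m) j.castSucc = x (m - (j : ℕ) + 1) := by
      have : ((j.castSucc : Fin (m+1)) : ℕ) ≤ (Fin.last m : ℕ) := by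
        simp only [Fin.coe_castSucc, Fin.val_last]; omega
      simp [Xmat, this]
    rw [hx]
    have hsign : (-1 : R[X]) ^ ((Fin.last m : ℕ) + ((j.castSucc : Fin (m+1)) : ℕ)) *
        (-1 : R[X]) ^ (m - ((j.castSucc : Fin (m+1)) : ℕ)) = 1 := by
      rw [← pow_add]
      have : (Fin.last m : ℕ) + ((j.castSucc : Fin (m+1)) : ℕ) +
          (m - ((j.castSucc : Fin (m+1)) : ℕ)) = 2 * m := by
        simp only [Fin.coe_castSucc, Fin.val_last]; omega
      rw [this, pow_mul]; simp
    calc (-1 : R[X]) ^ ((Fin.last m : ℕ) + ((j.castSucc : Fin (m+1)) : ℕ)) *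
        (-Polynomial.C (x (m - ((j.castSucc : Fin (m+1)) : ℕ) + 1))) *
        ((-1 : R[X]) ^ (m - ((j.castSucc : Fin (m+1)) : ℕ)) *
          ((Nat.descFactorial m (m - ((j.castSucc : Fin (m+1)) : ℕ)) : ℕ) : R[X]) *
          Fp x ((j.castSucc : Fin (m+1)) : ℕ))
        = ((-1 : R[X]) ^ ((Fin.last m : ℕ) + ((j.castSucc : Fin (m+1)) : ℕ)) *
            (-1 : R[X]) ^ (m - ((j.castSucc : Fin (m+1)) : ℕ))) *
          (-(((Nat.descFactorial m (m - ((j.castSucc : Fin (m+1)) : ℕ)) : ℕ) : R[X]) *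
            Polynomial.C (x (m - ((j.castSucc : Fin (m+1)) : ℕ) + 1)) *
            Fp x ((j.castSucc : Fin (m+1)) : ℕ))) := by ring
      _ = _ := by rw [hsign, Fin.coe_castSucc]; ring
  rw [Finset.sum_congr rfl (fun j _ => hterm j)]
  rw [Finset.sum_neg_distrib]
  ring

lemma Fp_zero : Fp x 0 = 1 := by
  rw [Fp, Matrix.charpoly]; exact det_isEmpty

lemma derivative_Fp (n : ℕ) :
    derivative (Fp x (n+1)) = ((n+1 : ℕ) : R[X]) * Fp x n := by
  induction n using Nat.strong_induction_on with
  | _ n ih =>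
    match n, ih with
    | 0, _ =>
      rw [Fp_succ, Fp_zero]
      simp
    | (n+1), ih =>
      have ihn := ih n (by omega)
      rw [Fp_succ x (n+1), derivative_sub, derivative_mul, derivative_sub, Polynomial.derivative_X,
        Polynomial.derivative_C, sub_zero, one_mul, ihn, Polynomial.derivative_sum]
      have hterm : ∀ j : Fin (n+1),
          derivative (((Nat.descFactorial (n+1) (n+1 - (j : ℕ)) : ℕ) : R[X]) *
            Polynomial.C (x (n+1 - (j : ℕ) + 1)) * Fp x (j : ℕ))
          = ((Nat.descFactorial (n+1) (n+1 - (j : ℕ)) : ℕ) : R[X]) *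
            Polynomial.C (x (n+1 - (j : ℕ) + 1)) * derivative (Fp x (j : ℕ)) := by
        intro j
        rw [derivative_mul, derivative_mul, derivative_natCast, Polynomial.derivative_C]
        ring
      rw [Finset.sum_congr rfl (fun j _ => hterm j), Fin.sum_univ_succ]
      have hzero : Polynomial.derivative (Fp x (((0 : Fin (n+1))) : ℕ)) = 0 := by
        simp [Fp_zero]
      have hsucc : ∀ i : Fin n,
          ((Nat.descFactorial (n+1) (n + 1 - ((i.succ : Fin (n+1)) : ℕ)) : ℕ) : R[X]) *
            Polynomial.C (x (n + 1 - ((i.succ : Fin (n+1)) : ℕ) + 1)) *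
            Polynomial.derivative (Fp x ((i.succ : Fin (n+1)) : ℕ))
          = ((n+1 : ℕ) : R[X]) * (((Nat.descFactorial n (n - (i : ℕ)) : ℕ) : R[X]) *
            Polynomial.C (x (n - (i : ℕ) + 1)) * Fp x (i : ℕ)) := by
        intro i
        have hilt : (i : ℕ) < n := i.isLt
        rw [Fin.val_succ, ih (i : ℕ) (by omega)]
        have e1 : n + 1 - ((i : ℕ) + 1) = n - (i : ℕ) := by omega
        rw [e1]
        have hnat : (n+1).descFactorial (n - (i : ℕ)) * ((i : ℕ) + 1)
            = (n+1) * Nat.descFactorial n (n - (i : ℕ)) := by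
          rw [mul_comm, show (i : ℕ) + 1 = n + 1 - (n - (i : ℕ)) from by omega,
            ← Nat.descFactorial_succ, Nat.succ_descFactorial_succ]
        have hc := congrArg (Nat.cast : ℕ → R[X]) hnat
        push_cast at hc
        push_cast
        linear_combination (Polynomial.C (x (n - (i : ℕ) + 1)) * Fp x (i : ℕ)) * hc
      rw [hzero, Finset.sum_congr rfl (fun i _ => hsucc i), ← Finset.mul_sum, Fp_succ x n]
      push_cast
      ring

theorem stmt1 (n : ℕ) (hn : 1 ≤ n) :
    Polynomial.derivative (Matrix.charpoly (Xmat (MvPolynomial ℕ ℚ) n MvPolynomial.X)) =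
      (n : Polynomial (MvPolynomial ℕ ℚ)) *
        Matrix.charpoly (Xmat (MvPolynomial ℕ ℚ) (n - 1) MvPolynomial.X) := by
  obtain ⟨m, rfl⟩ : ∃ m, n = m + 1 := ⟨n - 1, by omega⟩
  simpa [Fp] using derivative_Fp (R := MvPolynomial ℕ ℚ) MvPolynomial.X m
end

section
/- Let X_n be the structured matrix with first column (x_1,…,x_n)^T, superdiagonal entries 1,2,…,n-1, entries x_{i-j+1} for j ≤ i, and zeros elsewhere, over the field of rational functions in x_1,…,x_n. Then the standard basis vector e_n is a trace vector of X_n, i.e., e_n^T X_n^k e_n = (1/n) trace(X_n^k) for all k ≥ 0. -/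
open Matrix Polynomial PowerSeries

namespace TV


variable {R : Type*} [CommRing R]

/-- generic structured matrix: superdiagonal `c*(i+1)`, lower entries `x (i-j+1)`. -/
def A (c : R) (x : ℕ → R) (n : ℕ) : Matrix (Fin n) (Fin n) R :=
  fun i j =>
    if (j : ℕ) ≤ (i : ℕ) then x ((i : ℕ) - (j : ℕ) + 1)
    else if (j : ℕ) = (i : ℕ) + 1 then c * (((i : ℕ) + 1 : ℕ) : R)
    else 0

/-- the characteristic-style matrix `X•1 - C(A)`. -/
noncomputable def Y (c : R) (x : ℕ → R) (n : ℕ) : Matrix (Fin n) (Fin n) R[X] :=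
  (Polynomial.X : R[X]) • (1 : Matrix (Fin n) (Fin n) R[X]) - (A c x n).map Polynomial.C

lemma Y_apply (c : R) (x : ℕ → R) (n : ℕ) (i j : Fin n) :
    Y c x n i j = (if (i : ℕ) = (j : ℕ) then Polynomial.X else 0) -
      Polynomial.C (if (j : ℕ) ≤ (i : ℕ) then x ((i : ℕ) - (j : ℕ) + 1)
         else if (j : ℕ) = (i : ℕ) + 1 then c * (((i : ℕ) + 1 : ℕ) : R)
         else 0) := by
  have : Y c x n i j = (if i = j then Polynomial.X else 0) - Polynomial.C (A c x n i j) := by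
    simp [Y, Matrix.one_apply, mul_ite]
  rw [this]
  congr 1
  simp only [Fin.ext_iff]

/-- `Y` with the last row replaced by `-Polynomial.C (x (n+a-j))`. -/
noncomputable def Z (c : R) (x : ℕ → R) (a : ℕ) (n : ℕ) : Matrix (Fin n) (Fin n) R[X] :=
  fun i j =>
    if (i : ℕ) + 1 < n then Y c x n i j else -Polynomial.C (x (n + a - (j : ℕ)))

lemma Z_apply (c : R) (x : ℕ → R) (a n : ℕ) (i j : Fin n) :
    Z c x a n i j = if (i : ℕ) + 1 < n then Y c x n i j else -Polynomial.C (x (n + a - (j : ℕ))) := rfl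

lemma Y_apply_val (c : R) (x : ℕ → R) {n m : ℕ} (i j : Fin n) (i' j' : Fin m)
    (hi : (i : ℕ) = (i' : ℕ)) (hj : (j : ℕ) = (j' : ℕ)) :
    Y c x n i j = Y c x m i' j' := by
  rw [Y_apply, Y_apply, hi, hj]

lemma Y_diag (c : R) (x : ℕ → R) (n : ℕ) (i : Fin n) :
    Y c x n i i = Polynomial.X - Polynomial.C (x 1) := by
  rw [Y_apply, if_pos rfl, if_pos le_rfl,
    show (i : ℕ) - (i : ℕ) + 1 = 1 by omega]

lemma Y_lastcol_zero (c : R) (x : ℕ → R) {k : ℕ} (i : Fin (k+2)) (hi : (i : ℕ) < k) :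
    Y c x (k+2) i (Fin.last (k+1)) = 0 := by
  rw [Y_apply]
  rw [if_neg (by simp [Fin.val_last]; omega), if_neg (by simp [Fin.val_last]; omega),
    if_neg (by simp [Fin.val_last]; omega)]
  simp

lemma Y_lastcol_k (c : R) (x : ℕ → R) {k : ℕ} :
    Y c x (k+2) (⟨k, by omega⟩ : Fin (k+2)) (Fin.last (k+1)) = -Polynomial.C (c * (((k + 1 : ℕ)) : R)) := by
  rw [Y_apply]
  rw [if_neg (by simp [Fin.val_last]), if_neg (by simp [Fin.val_last]),
    if_pos (by simp [Fin.val_last])]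
  simp

lemma Z_lastcol_zero (c : R) (x : ℕ → R) {a k : ℕ} (i : Fin (k+2)) (hi : (i : ℕ) < k) :
    Z c x a (k+2) i (Fin.last (k+1)) = 0 := by
  rw [Z_apply, if_pos (by omega)]
  exact Y_lastcol_zero c x i hi

lemma Z_lastcol_k (c : R) (x : ℕ → R) {a k : ℕ} :
    Z c x a (k+2) (⟨k, by omega⟩ : Fin (k+2)) (Fin.last (k+1)) = -Polynomial.C (c * (((k + 1 : ℕ)) : R)) := by
  rw [Z_apply, if_pos (by simp)]
  exact Y_lastcol_k c x

lemma Z_lastlast (c : R) (x : ℕ → R) {a k : ℕ} :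
    Z c x a (k+1) (Fin.last k) (Fin.last k) = -Polynomial.C (x (a + 1)) := by
  rw [Z_apply, if_neg (by simp [Fin.val_last]),
    show (k + 1) + a - ((Fin.last k : Fin (k+1)) : ℕ) = a + 1 by simp [Fin.val_last]; try omega]

lemma subYY (c : R) (x : ℕ → R) (n : ℕ) :
    (Y c x (n+1)).submatrix Fin.castSucc Fin.castSucc = Y c x n := by
  refine Matrix.ext fun i j => ?_
  exact Y_apply_val c x i.castSucc j.castSucc i j (by simp) (by simp)

lemma subZY (c : R) (x : ℕ → R) (a n : ℕ) :
    (Z c x a (n+1)).submatrix Fin.castSucc Fin.castSucc = Y c x n := by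
  refine Matrix.ext fun i j => ?_
  rw [submatrix_apply, Z_apply, if_pos (by simp [Nat.lt_succ_iff]; try omega)]
  exact Y_apply_val c x i.castSucc j.castSucc i j (by simp) (by simp)

lemma succAbove_lt {k : ℕ} (i : Fin (k+1)) (hik : (i : ℕ) < k) :
    (⟨k, by omega⟩ : Fin (k+2)).succAbove i = ⟨(i : ℕ), by omega⟩ := by
  rw [Fin.succAbove_of_castSucc_lt _ _ (by rw [Fin.lt_def]; simpa using hik)]
  rfl

lemma succAbove_eq {k : ℕ} (i : Fin (k+1)) (hik : (i : ℕ) = k) :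
    (⟨k, by omega⟩ : Fin (k+2)).succAbove i = ⟨k + 1, by omega⟩ := by
  rw [Fin.succAbove_of_le_castSucc _ _ (by rw [Fin.le_def]; simpa using hik.ge)]
  simp [Fin.ext_iff, hik]

lemma subYZ (c : R) (x : ℕ → R) (k : ℕ) :
    (Y c x (k+2)).submatrix (Fin.succAbove ⟨k, by omega⟩) Fin.castSucc = Z c x 1 (k+1) := by
  refine Matrix.ext fun i j => ?_
  rw [submatrix_apply, Z_apply]
  by_cases hik : (i : ℕ) < k
  · rw [if_pos (by omega), succAbove_lt i hik]
    exact Y_apply_val c x ⟨(i : ℕ), by omega⟩ j.castSucc i j (by simp) (by simp)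
  · have hik' : (i : ℕ) = k := by omega
    have hj := j.isLt
    rw [if_neg (by omega), succAbove_eq i hik', Y_apply]
    rw [if_neg (by simp; try omega), if_pos (by simp; try omega)]
    rw [show ((⟨k + 1, by omega⟩ : Fin (k+2)) : ℕ) - ((j.castSucc : Fin (k+2)) : ℕ) + 1
        = (k+1) + 1 - (j : ℕ) by simp; try omega]
    rw [zero_sub]

lemma subZZ (c : R) (x : ℕ → R) (a k : ℕ) :
    (Z c x a (k+2)).submatrix (Fin.succAbove ⟨k, by omega⟩) Fin.castSucc = Z c x (a+1) (k+1) := by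
  refine Matrix.ext fun i j => ?_
  rw [submatrix_apply, Z_apply c x (a+1)]
  by_cases hik : (i : ℕ) < k
  · rw [if_pos (by omega), succAbove_lt i hik, Z_apply, if_pos (by simp; try omega)]
    exact Y_apply_val c x ⟨(i : ℕ), by omega⟩ j.castSucc i j (by simp) (by simp)
  · have hik' : (i : ℕ) = k := by omega
    have hj := j.isLt
    rw [if_neg (by omega), succAbove_eq i hik', Z_apply, if_neg (by simp)]
    rw [show (k+2) + a - ((j.castSucc : Fin (k+2)) : ℕ) = (k+1) + (a+1) - (j : ℕ) by simp only [Fin.coe_castSucc]; omega]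

end TV

namespace TV

variable {R : Type*} [CommRing R]

lemma det_expand_last {S : Type*} [CommRing S] {k : ℕ}
    (M : Matrix (Fin (k+2)) (Fin (k+2)) S)
    (h0 : ∀ i : Fin (k+2), (i : ℕ) < k → M i (Fin.last (k+1)) = 0) :
    det M = M (Fin.last (k+1)) (Fin.last (k+1)) *
        det (M.submatrix Fin.castSucc Fin.castSucc)
      - M (⟨k, by omega⟩ : Fin (k+2)) (Fin.last (k+1)) *
        det (M.submatrix (Fin.succAbove ⟨k, by omega⟩) Fin.castSucc) := by
  rw [det_succ_column M (Fin.last (k+1))]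
  rw [Fin.sum_univ_castSucc, Fin.sum_univ_castSucc]
  have hz : ∀ i : Fin k,
      (-1 : S) ^ (((i.castSucc.castSucc : Fin (k+2)) : ℕ) + ((Fin.last (k+1) : Fin (k+2)) : ℕ)) *
          M i.castSucc.castSucc (Fin.last (k+1)) *
          det (M.submatrix (Fin.succAbove i.castSucc.castSucc) ((Fin.last (k+1)).succAbove)) = 0 := by
    intro i
    rw [h0 _ (by simp)]
    ring
  rw [Finset.sum_eq_zero fun i _ => hz i, zero_add]
  have h1 : ((Fin.last k).castSucc : Fin (k+2)) = ⟨k, by omega⟩ := rfl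
  rw [Fin.succAbove_last]
  have e1 : (-1 : S) ^ (((Fin.last (k+1) : Fin (k+2)) : ℕ) + ((Fin.last (k+1)) : ℕ)) = 1 := by
    simp [Fin.val_last]
  have e2 : (-1 : S) ^ ((((Fin.last k).castSucc : Fin (k+2)) : ℕ) + ((Fin.last (k+1)) : ℕ)) = -1 := by
    simp [Fin.val_last]
  rw [h1] at e2 ⊢
  rw [e1, e2]
  ring

lemma recY (c : R) (x : ℕ → R) (k : ℕ) :
    det (Y c x (k+1)) = (Polynomial.X - Polynomial.C (x 1)) * det (Y c x k)
      + Polynomial.C (c * ((k : ℕ) : R)) * det (Z c x 1 k) := by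
  cases k with
  | zero =>
    rw [det_fin_one, Y_diag]
    simp
  | succ k =>
    rw [det_expand_last (Y c x (k+2)) (fun i hi => Y_lastcol_zero c x i hi)]
    rw [Y_diag, Y_lastcol_k, subYY, subYZ]
    push_cast
    ring

lemma recZ (c : R) (x : ℕ → R) (a k : ℕ) :
    det (Z c x a (k+1)) = -Polynomial.C (x (a+1)) * det (Y c x k)
      + Polynomial.C (c * ((k : ℕ) : R)) * det (Z c x (a+1) k) := by
  cases k with
  | zero =>
    rw [det_fin_one, show (0 : Fin 1) = Fin.last 0 from rfl, Z_lastlast]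
    simp
  | succ k =>
    rw [det_expand_last (Z c x a (k+2)) (fun i hi => Z_lastcol_zero c x i hi)]
    rw [Z_lastlast, Z_lastcol_k, subZY, subZZ]
    push_cast
    ring

end TV

namespace TV

variable {R : Type*} [CommRing R]

lemma dYZ (c : R) (x : ℕ → R) (k : ℕ) :
    (derivative (det (Y c x (k+1))) = ((k+1 : ℕ) : R[X]) * det (Y c x k))
      ∧ ∀ a, derivative (det (Z c x a (k+1))) = ((k : ℕ) : R[X]) * det (Z c x a k) := by
  induction k with
  | zero =>
    constructor
    · rw [det_fin_one, Y_diag, det_isEmpty]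
      simp
    · intro a
      rw [det_fin_one, show (0 : Fin 1) = Fin.last 0 from rfl, Z_lastlast]
      simp
  | succ k ih =>
    have hY := ih.1
    have hZ := ih.2
    constructor
    · rw [recY c x (k+1)]
      rw [derivative_add, derivative_mul, derivative_mul, Polynomial.derivative_C, derivative_sub,
        Polynomial.derivative_X, Polynomial.derivative_C, hY, hZ 1]
      rw [recY c x k]
      simp only [C_mul, map_natCast]
      push_cast
      ring
    · intro a
      rw [recZ c x a (k+1)]
      rw [derivative_add, derivative_mul, derivative_mul, Polynomial.derivative_C, derivative_neg,
        Polynomial.derivative_C, hY, hZ (a+1)]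
      rw [recZ c x a k]
      simp only [C_mul, map_natCast]
      push_cast
      ring

lemma derivative_finset_prod {ι : Type*} [DecidableEq ι] (s : Finset ι) (f : ι → R[X]) :
    derivative (∏ i ∈ s, f i) = ∑ i ∈ s, (∏ j ∈ s.erase i, f j) * derivative (f i) := by
  rw [Finset.prod_eq_multiset_prod, Polynomial.derivative_prod, Finset.sum_eq_multiset_sum]
  congr 1

lemma derivative_det {m : ℕ} (M : Matrix (Fin m) (Fin m) R[X]) :
    derivative (det M) = ∑ j : Fin m, det (M.updateCol j (fun i => derivative (M i j))) := by
  classical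
  rw [det_apply', map_sum]
  have key : ∀ σ : Equiv.Perm (Fin m),
      derivative (((Equiv.Perm.sign σ : ℤ) : R[X]) * ∏ i, M (σ i) i)
        = ∑ j, ((Equiv.Perm.sign σ : ℤ) : R[X]) *
            ((∏ i ∈ Finset.univ.erase j, M (σ i) i) * derivative (M (σ j) j)) := by
    intro σ
    rw [derivative_mul, derivative_intCast, zero_mul, zero_add, derivative_finset_prod,
      Finset.mul_sum]
  rw [Finset.sum_congr rfl fun σ _ => key σ, Finset.sum_comm]
  refine Finset.sum_congr rfl fun j _ => ?_
  rw [det_apply']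
  refine Finset.sum_congr rfl fun σ _ => ?_
  congr 1
  rw [← Finset.mul_prod_erase Finset.univ
      (fun i => (M.updateCol j (fun i' => derivative (M i' j))) (σ i) i) (Finset.mem_univ j)]
  rw [Matrix.updateCol_self]
  rw [Finset.prod_congr rfl
    (fun i hi => Matrix.updateCol_ne (Finset.ne_of_mem_erase hi))]
  ring

lemma trace_adjugate_Y (c : R) (x : ℕ → R) (n : ℕ) :
    Matrix.trace (adjugate (Y c x n)) = derivative (det (Y c x n)) := by
  rw [derivative_det, Matrix.trace]
  refine Finset.sum_congr rfl fun j _ => ?_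
  have hcol : (fun i => derivative (Y c x n i j)) = Pi.single j (1 : R[X]) := by
    funext i
    rw [Y_apply]
    by_cases h : i = j
    · subst h
      rw [if_pos rfl]
      simp
    · rw [if_neg (fun hh => h (Fin.ext hh))]
      simp [Pi.single_eq_of_ne h]
  rw [hcol, ← Matrix.det_transpose, ← Matrix.updateRow_transpose, ← adjugate_apply,
    ← Matrix.adjugate_transpose, Matrix.transpose_apply]
  rfl

lemma key_poly (c : R) (x : ℕ → R) (n : ℕ) :
    Matrix.trace (adjugate (Y c x (n+1))) =
      ((n+1 : ℕ) : R[X]) * adjugate (Y c x (n+1)) (Fin.last n) (Fin.last n) := by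
  rw [trace_adjugate_Y, (dYZ c x n).1]
  congr 1
  rw [show adjugate (Y c x (n+1)) (Fin.last n) (Fin.last n)
      = (-1 : R[X]) ^ (((Fin.last n : Fin (n+1)) : ℕ) + ((Fin.last n : Fin (n+1)) : ℕ)) *
        det ((Y c x (n+1)).submatrix (Fin.last n).succAbove (Fin.last n).succAbove) from
    adjugate_fin_succ_eq_det_submatrix _ _ _]
  rw [Fin.succAbove_last, subYY]
  simp [Fin.val_last]

end TV

namespace TV

variable {R : Type*} [CommRing R]

lemma mapY (c : R) (x : ℕ → R) (n : ℕ) :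
    (Polynomial.evalRingHom (1 : R)).mapMatrix (Y c x n) = 1 - A c x n := by
  refine Matrix.ext fun i j => ?_
  simp only [RingHom.mapMatrix_apply, Matrix.map_apply, Matrix.sub_apply, Matrix.one_apply]
  rw [show Y c x n i j = (if i = j then Polynomial.X else 0) - Polynomial.C (A c x n i j) by
      simp [Y, Matrix.one_apply, mul_ite]]
  by_cases h : i = j <;> simp [h, coe_evalRingHom]

lemma key_spec (c : R) (x : ℕ → R) (n : ℕ) :
    Matrix.trace (adjugate ((1 : Matrix (Fin (n+1)) (Fin (n+1)) R) - A c x (n+1))) =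
      ((n+1 : ℕ) : R) * adjugate ((1 : Matrix (Fin (n+1)) (Fin (n+1)) R) - A c x (n+1))
        (Fin.last n) (Fin.last n) := by
  have h := congrArg (Polynomial.evalRingHom (1 : R)) (key_poly c x n)
  have hadj : ((adjugate (Y c x (n+1))).map (Polynomial.evalRingHom (1 : R)))
      = adjugate ((1 : Matrix (Fin (n+1)) (Fin (n+1)) R) - A c x (n+1)) := by
    rw [← RingHom.mapMatrix_apply, RingHom.map_adjugate, mapY]
  rw [_root_.map_mul, map_natCast, AddMonoidHom.map_trace] at h
  rw [show (Polynomial.evalRingHom (1:R)) (adjugate (Y c x (n+1)) (Fin.last n) (Fin.last n))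
      = ((adjugate (Y c x (n+1))).map (Polynomial.evalRingHom (1:R))) (Fin.last n) (Fin.last n)
      from rfl, hadj] at h
  exact h

end TV

namespace TV

open PowerSeries

variable {F : Type*} [Field F]

set_option maxHeartbeats 1000000 in
lemma trace_eq (n : ℕ) (xv : ℕ → F) (k : ℕ) :
    Matrix.trace ((Xmat F (n+1) xv) ^ k) =
      (((n+1 : ℕ)) : F) * ((Xmat F (n+1) xv) ^ k) (Fin.last n) (Fin.last n) := by
  classical
  set Xf := Xmat F (n+1) xv with hXf
  set xx : ℕ → F⟦X⟧ := fun m => PowerSeries.X * PowerSeries.C (xv m) with hxx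
  set M : Matrix (Fin (n+1)) (Fin (n+1)) F⟦X⟧ :=
    1 - A PowerSeries.X xx (n+1) with hM
  set Nm : Matrix (Fin (n+1)) (Fin (n+1)) F⟦X⟧ :=
    Matrix.of (fun i j => PowerSeries.mk (fun d => (Xf ^ d) i j)) with hNm
  have hA : ∀ i j, A PowerSeries.X xx (n+1) i j = PowerSeries.X * PowerSeries.C (Xf i j) := by
    intro i j
    simp only [A, Xmat, hxx, hXf]
    split_ifs with h1 h2
    · rfl
    · rw [map_natCast]
    · rw [map_zero, mul_zero]
  have hsum : ∀ i j, (∑ l, PowerSeries.C (Xf i l) * Nm l j)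
      = PowerSeries.mk (fun d => (Xf ^ (d+1)) i j) := by
    intro i j
    ext d
    rw [map_sum]
    simp only [PowerSeries.coeff_C_mul, hNm, Matrix.of_apply, coeff_mk]
    rw [pow_succ', Matrix.mul_apply]
  have hMN : M * Nm = 1 := by
    refine Matrix.ext fun i j => ?_
    have hentry : ∀ l, M i l * Nm l j
        = (if i = l then Nm l j else 0) - PowerSeries.X * (PowerSeries.C (Xf i l) * Nm l j) := by
      intro l
      rw [hM, Matrix.sub_apply, Matrix.one_apply, hA, sub_mul, ite_mul, one_mul, zero_mul,
        mul_assoc]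
    rw [Matrix.mul_apply, Finset.sum_congr rfl fun l _ => hentry l, Finset.sum_sub_distrib,
      Finset.sum_ite_eq, if_pos (Finset.mem_univ i), ← Finset.mul_sum, hsum]
    ext d
    cases d with
    | zero =>
      simp only [map_sub, coeff_zero_X_mul, hNm, Matrix.of_apply, coeff_mk, pow_zero, sub_zero]
      rw [Matrix.one_apply, Matrix.one_apply]
      split_ifs <;> simp
    | succ d =>
      simp only [map_sub, coeff_succ_X_mul, hNm, Matrix.of_apply, coeff_mk]
      rw [Matrix.one_apply]
      split_ifs <;> simp [PowerSeries.coeff_one]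
  have hdet : det M ≠ 0 := by
    intro h0
    have h1 := congrArg (PowerSeries.constantCoeff) h0
    rw [RingHom.map_det, map_zero] at h1
    have h2 : (PowerSeries.constantCoeff).mapMatrix M = (1 : Matrix (Fin (n+1)) (Fin (n+1)) F) := by
      refine Matrix.ext fun i j => ?_
      simp only [RingHom.mapMatrix_apply, Matrix.map_apply, hM, Matrix.sub_apply, Matrix.one_apply,
        hA]
      rw [map_sub, _root_.map_mul, constantCoeff_X, zero_mul, sub_zero]
      split_ifs <;> simp
    rw [h2, det_one] at h1
    exact (one_ne_zero (α := F)) h1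
  have hadjM : adjugate M = det M • Nm := by
    calc adjugate M = adjugate M * (M * Nm) := by rw [hMN, Matrix.mul_one]
    _ = (adjugate M * M) * Nm := by rw [Matrix.mul_assoc]
    _ = (det M • 1) * Nm := by rw [Matrix.adjugate_mul]
    _ = det M • Nm := by rw [Matrix.smul_mul, Matrix.one_mul]
  have hkey := key_spec (PowerSeries.X : F⟦X⟧) xx n
  rw [← hM, hadjM, Matrix.trace_smul, Matrix.smul_apply, smul_eq_mul, smul_eq_mul] at hkey
  have h3 : Matrix.trace Nm = (((n+1:ℕ)) : F⟦X⟧) * Nm (Fin.last n) (Fin.last n) :=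
    mul_left_cancel₀ hdet (hkey.trans (by ring))
  have h4 := congrArg (PowerSeries.coeff k) h3
  rw [Matrix.trace, map_sum] at h4
  rw [show (((n+1:ℕ)) : F⟦X⟧) = PowerSeries.C (((n+1:ℕ)) : F) by rw [map_natCast],
    PowerSeries.coeff_C_mul] at h4
  simp only [Matrix.diag_apply, hNm, Matrix.of_apply, coeff_mk] at h4
  rw [Matrix.trace]
  simpa using h4

end TV

theorem stmt3 (n : ℕ) (hn : 0 < n) (k : ℕ) :
    ((Xmat (FractionRing (MvPolynomial ℕ ℚ)) n
        (fun j => algebraMap (MvPolynomial ℕ ℚ) (FractionRing (MvPolynomial ℕ ℚ))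
          (MvPolynomial.X j))) ^ k) ⟨n - 1, by omega⟩ ⟨n - 1, by omega⟩
      = (n : FractionRing (MvPolynomial ℕ ℚ))⁻¹ *
          Matrix.trace ((Xmat (FractionRing (MvPolynomial ℕ ℚ)) n
            (fun j => algebraMap (MvPolynomial ℕ ℚ) (FractionRing (MvPolynomial ℕ ℚ))
              (MvPolynomial.X j))) ^ k) := by
  obtain ⟨m, rfl⟩ := Nat.exists_eq_succ_of_ne_zero hn.ne'
  set F := FractionRing (MvPolynomial ℕ ℚ) with hF
  have hTr := TV.trace_eq m
    (fun j => algebraMap (MvPolynomial ℕ ℚ) F (MvPolynomial.X j)) k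
  have hidx : (⟨m + 1 - 1, by omega⟩ : Fin (m+1)) = Fin.last m := rfl
  rw [hidx, hTr]
  have hne : (((m+1 : ℕ)) : F) ≠ 0 := Nat.cast_ne_zero.mpr (Nat.succ_ne_zero m)
  push_cast
  rw [inv_mul_cancel_left₀ (by push_cast at hne; exact hne)]
end

section
/- Let λ_1,…,λ_n be positive real numbers and f(t) = (∏_{i=1}^n (1 - λ_i t))^{1/n}, interpreted as the formal power series exp((1/n) ∑_i log(1 - λ_i t)). Then all coefficients of the power series 1 - f(t) (in degrees ≥ 1) are nonnegative. -/
open PowerSeries Finset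

namespace Stmt6Aux

noncomputable def geo (a : ℝ) : PowerSeries ℝ := PowerSeries.mk fun k => a ^ k

lemma geo_mul (a : ℝ) : (1 - PowerSeries.C a * X) * geo a = 1 := by
  ext k
  rcases k with _ | k
  · simp [geo]
  · rw [sub_mul, one_mul, map_sub, mul_assoc, coeff_C_mul, coeff_succ_X_mul]
    simp [geo, coeff_mk, pow_succ, coeff_one]
    ring

/-- derivative of a product of linear factors -/
lemma dProd {ι : Type*} [DecidableEq ι] (s : Finset ι) (a : ι → ℝ) :
    d⁄dX ℝ (∏ i ∈ s, (1 - C (a i) * X))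
      = -∑ i ∈ s, C (a i) * ∏ j ∈ s.erase i, (1 - C (a j) * X) := by
  induction s using Finset.induction_on with
  | empty => simp
  | @insert c s hc ih =>
    rw [prod_insert hc, Derivation.leibniz, ih]
    have hdc : d⁄dX ℝ (1 - C (a c) * X) = - C (a c) := by
      rw [map_sub, Derivation.leibniz, derivative_X, derivative_C]
      simp
    rw [hdc, sum_insert hc, erase_insert hc]
    have h2 : ∑ i ∈ s, C (a i) * ∏ j ∈ (insert c s).erase i, (1 - C (a j) * X)
        = ∑ i ∈ s, C (a i) * ((1 - C (a c) * X) * ∏ j ∈ s.erase i, (1 - C (a j) * X)) := by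
      apply Finset.sum_congr rfl
      intro i hi
      have : (insert c s).erase i = insert c (s.erase i) := by
        rw [Finset.erase_insert_of_ne]
        intro hic; exact hc (hic ▸ hi)
      rw [this, prod_insert (by simp [hc, Finset.mem_erase])]
    rw [h2]
    simp only [smul_eq_mul, mul_neg, neg_add]
    rw [add_comm]
    congr 1
    · ring
    · congr 1
      rw [Finset.mul_sum]
      apply Finset.sum_congr rfl
      intro i hi
      ring

section Pineq
variable (n : ℕ) (l : Fin n → ℝ)

noncomputable def pp (x : ℕ) : ℝ := ∑ i, l i ^ x

lemma pp_pos (hn : 0 < n) (hl : ∀ i, 0 < l i) (x : ℕ) : 0 < pp n l x := by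
  have : Nonempty (Fin n) := Fin.pos_iff_nonempty.mp hn
  exact Finset.sum_pos (fun i _ => pow_pos (hl i) x) Finset.univ_nonempty

lemma sign_lemma (a b : ℝ) (ha : 0 ≤ a) (hb : 0 ≤ b) (x y : ℕ) :
    0 ≤ (a ^ x - b ^ x) * (a ^ y - b ^ y) := by
  rcases le_total a b with hab | hab
  · have h1 : a ^ x ≤ b ^ x := pow_le_pow_left₀ ha hab x
    have h2 : a ^ y ≤ b ^ y := pow_le_pow_left₀ ha hab y
    nlinarith
  · have h1 : b ^ x ≤ a ^ x := pow_le_pow_left₀ hb hab x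
    have h2 : b ^ y ≤ a ^ y := pow_le_pow_left₀ hb hab y
    nlinarith

lemma cheb1 (hl : ∀ i, 0 < l i) (x y : ℕ) :
    pp n l x * pp n l y ≤ n * pp n l (x + y) := by
  have key : 0 ≤ ∑ i, ∑ j, (l i ^ x - l j ^ x) * (l i ^ y - l j ^ y) :=
    Finset.sum_nonneg fun i _ => Finset.sum_nonneg fun j _ =>
      sign_lemma (l i) (l j) (hl i).le (hl j).le x y
  have expand : ∑ i, ∑ j, (l i ^ x - l j ^ x) * (l i ^ y - l j ^ y)
      = 2 * ((n : ℝ) * pp n l (x + y) - pp n l x * pp n l y) := by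
    have : ∀ i j : Fin n, (l i ^ x - l j ^ x) * (l i ^ y - l j ^ y)
        = l i ^ (x+y) + l j ^ (x+y) - l i ^ x * l j ^ y - l j ^ x * l i ^ y := by
      intro i j; rw [pow_add, pow_add]; ring
    simp only [this]
    simp only [Finset.sum_sub_distrib, Finset.sum_add_distrib, Finset.sum_const,
      Finset.card_univ, Fintype.card_fin, nsmul_eq_mul, ← Finset.sum_mul, ← Finset.mul_sum]
    simp only [pp]
    ring
  linarith [key, expand.symm.le]

lemma cheb2 (hl : ∀ i, 0 < l i) (x y : ℕ) (hxy : y ≤ x) :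
    pp n l x * pp n l (y + 1) ≤ pp n l (x + 1) * pp n l y := by
  obtain ⟨d, rfl⟩ : ∃ d, x = y + d := ⟨x - y, by omega⟩
  have key : 0 ≤ ∑ i, ∑ j, (l i - l j) * (l i ^ d - l j ^ d) * (l i ^ y * l j ^ y) := by
    refine Finset.sum_nonneg fun i _ => Finset.sum_nonneg fun j _ => ?_
    have h1 : 0 ≤ (l i - l j) * (l i ^ d - l j ^ d) := by
      have := sign_lemma (l i) (l j) (hl i).le (hl j).le 1 d
      simpa using this
    have h2 : 0 ≤ l i ^ y * l j ^ y := mul_nonneg (pow_nonneg (hl i).le y) (pow_nonneg (hl j).le y)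
    exact mul_nonneg h1 h2
  have expand : ∑ i, ∑ j, (l i - l j) * (l i ^ d - l j ^ d) * (l i ^ y * l j ^ y)
      = 2 * (pp n l (y + d + 1) * pp n l y - pp n l (y + d) * pp n l (y + 1)) := by
    have : ∀ i j : Fin n, (l i - l j) * (l i ^ d - l j ^ d) * (l i ^ y * l j ^ y)
        = l i ^ (y+d+1) * l j ^ y + l j ^ (y+d+1) * l i ^ y
          - l i ^ (y+d) * l j ^ (y+1) - l j ^ (y+d) * l i ^ (y+1) := by
      intro i j
      have e1 : l i ^ (y+d+1) = l i * l i ^ d * l i ^ y := by rw [pow_add, pow_add, pow_one]; ring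
      have e2 : l j ^ (y+d+1) = l j * l j ^ d * l j ^ y := by rw [pow_add, pow_add, pow_one]; ring
      have e3 : l i ^ (y+d) = l i ^ d * l i ^ y := by rw [pow_add]; ring
      have e4 : l j ^ (y+d) = l j ^ d * l j ^ y := by rw [pow_add]; ring
      have e5 : l i ^ (y+1) = l i * l i ^ y := by rw [pow_succ]; ring
      have e6 : l j ^ (y+1) = l j * l j ^ y := by rw [pow_succ]; ring
      rw [e1, e2, e3, e4, e5, e6]; ring
    simp only [this]
    simp only [Finset.sum_sub_distrib, Finset.sum_add_distrib,
      ← Finset.sum_mul, ← Finset.mul_sum]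
    simp only [pp]
    ring
  linarith [key, expand.symm.le]

end Pineq

noncomputable def Rk (ρ b : ℕ → ℝ) (k s : ℕ) : ℝ :=
  ρ (k + s) - ∑ j ∈ Finset.range k, ρ (j + s) * b (k - j)

lemma seq_main (ρ b : ℕ → ℝ)
    (hρ : ∀ j, 0 < ρ j)
    (hA1 : ∀ a c, ρ a * ρ c ≤ ρ (a + c + 1))
    (hA2 : ∀ a c, c ≤ a → ρ a * ρ (c + 1) ≤ ρ (a + 1) * ρ c)
    (hrec : ∀ k : ℕ, ((k : ℝ) + 1) * b (k + 1)
        = ρ k - ∑ j ∈ Finset.range k, ρ j * b (k - j)) :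
    ∀ k, (∀ s, 0 ≤ Rk ρ b k s)
      ∧ (∀ s, ρ (k + s + 1) * Rk ρ b k s ≤ ρ (k + s) * Rk ρ b k (s + 1)) := by
  intro k
  induction k with
  | zero =>
    constructor
    · intro s; simp [Rk]; exact (hρ s).le
    · intro s; simp [Rk]; rw [mul_comm]
  | succ k ih =>
    obtain ⟨ihpos, ihrt⟩ := ih
    have hk1 : (0:ℝ) < (k:ℝ) + 1 := by positivity
    have hb1 : ((k:ℝ)+1) * b (k+1) = Rk ρ b k 0 := by
      rw [hrec k, Rk]
      simp
    have hbpos : 0 ≤ b (k+1) := by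
      have h0 := ihpos 0
      rw [← hb1] at h0
      nlinarith
    have hble : b (k+1) ≤ Rk ρ b k 0 := by
      have h0 := ihpos 0
      nlinarith [hb1]
    have hkey : ∀ s, Rk ρ b (k+1) s = Rk ρ b k (s+1) - ρ s * b (k+1) := by
      intro s
      rw [Rk, Rk]
      rw [Finset.sum_range_succ']
      have e0 : (0:ℕ) + s = s := by omega
      have e1 : k + 1 + s = k + (s+1) := by omega
      rw [e0, e1]
      have e2 : ∀ i ∈ Finset.range k, ρ (i + 1 + s) * b (k + 1 - (i+1))
          = ρ (i + (s+1)) * b (k - i) := by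
        intro i hi
        have e3 : i + 1 + s = i + (s+1) := by omega
        have e4 : k + 1 - (i+1) = k - i := by omega
        rw [e3, e4]
      rw [Finset.sum_congr rfl e2]
      have e5 : k + 1 - 0 = k + 1 := by omega
      rw [e5]
      ring
    have hchain : ∀ s, ρ (k + s) * Rk ρ b k 0 ≤ ρ k * Rk ρ b k s := by
      intro s
      induction s with
      | zero => simp
      | succ s ihs =>
        have h1 := ihrt s
        have h2 : ρ (k+s+1) * (ρ (k + s) * Rk ρ b k 0) ≤ ρ (k+s+1) * (ρ k * Rk ρ b k s) :=
          mul_le_mul_of_nonneg_left ihs (hρ _).le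
        have h3 : ρ k * (ρ (k + s + 1) * Rk ρ b k s) ≤ ρ k * (ρ (k + s) * Rk ρ b k (s+1)) :=
          mul_le_mul_of_nonneg_left h1 (hρ k).le
        have h4 : ρ (k+s) * (ρ (k + s + 1) * Rk ρ b k 0) ≤ ρ (k+s) * (ρ k * Rk ρ b k (s+1)) := by
          nlinarith [h2, h3]
        have e1 : k + (s+1) = k + s + 1 := by omega
        rw [e1]
        exact le_of_mul_le_mul_left h4 (hρ (k+s))
    constructor
    · intro s
      have hstep : ρ k * (ρ s * b (k+1)) ≤ ρ (k + s + 1) * Rk ρ b k 0 := by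
        have i1 : ρ k * ρ s * b (k+1) ≤ ρ k * ρ s * Rk ρ b k 0 :=
          mul_le_mul_of_nonneg_left hble (mul_nonneg (hρ k).le (hρ s).le)
        have i2 : ρ k * ρ s * Rk ρ b k 0 ≤ ρ (k + s + 1) * Rk ρ b k 0 :=
          mul_le_mul_of_nonneg_right (hA1 k s) (ihpos 0)
        nlinarith [i1, i2]
      have hch := hchain (s+1)
      have e1 : k + (s+1) = k + s + 1 := by omega
      rw [e1] at hch
      have : 0 ≤ ρ k * Rk ρ b (k+1) s := by
        rw [hkey s, mul_sub]
        nlinarith [hstep, hch]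
      nlinarith [this, hρ k]
    · intro s
      rw [hkey s, hkey (s+1)]
      have h1 := ihrt (s+1)
      have h2 : ρ (k+1+s) * ρ (s+1) * b (k+1) ≤ ρ (k+1+s+1) * ρ s * b (k+1) :=
        mul_le_mul_of_nonneg_right (hA2 (k+1+s) s (by omega)) hbpos
      have e1 : k + 1 + s + 1 = k + (s+1) + 1 := by omega
      have e2 : k + 1 + s = k + (s+1) := by omega
      rw [e1, e2] at h2 ⊢
      rw [mul_sub, mul_sub]
      have e3 : k + (s+1) + 1 = k + (s+1+1) := by omega
      rw [e3]
      have e4 : k + (s + 1) + 1 = k + (s+1+1) := by omega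
      rw [e4] at h1 h2
      nlinarith [h1, h2]

lemma seq_bpos (ρ b : ℕ → ℝ)
    (hρ : ∀ j, 0 < ρ j)
    (hA1 : ∀ a c, ρ a * ρ c ≤ ρ (a + c + 1))
    (hA2 : ∀ a c, c ≤ a → ρ a * ρ (c + 1) ≤ ρ (a + 1) * ρ c)
    (hrec : ∀ k : ℕ, ((k : ℝ) + 1) * b (k + 1)
        = ρ k - ∑ j ∈ Finset.range k, ρ j * b (k - j)) :
    ∀ k, 0 ≤ b (k + 1) := by
  intro k
  have h0 := (seq_main ρ b hρ hA1 hA2 hrec k).1 0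
  have hb1 : ((k:ℝ)+1) * b (k+1) = Rk ρ b k 0 := by
    rw [hrec k, Rk]; simp
  have hk1 : (0:ℝ) < (k:ℝ) + 1 := by positivity
  nlinarith


section Main
variable (n : ℕ) (l : Fin n → ℝ)

noncomputable def P : PowerSeries ℝ := ∏ i, (1 - PowerSeries.C (l i) * PowerSeries.X)
noncomputable def rser : PowerSeries ℝ :=
  C (1 / n : ℝ) * ∑ i, C (l i) * geo (l i)

lemma P_const : constantCoeff (P n l) = 1 := by
  rw [P, map_prod]; simp

lemma P_ne_zero : P n l ≠ 0 := by
  intro hP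
  have := P_const n l
  rw [hP] at this
  simp at this

lemma P_mul_r (hn : 0 < n) : P n l * rser n l
    = ∑ i, C (l i / n) * ∏ j ∈ Finset.univ.erase i, (1 - C (l j) * X) := by
  have step1 : P n l * rser n l = ∑ i, C (1/n : ℝ) * (C (l i) * (P n l * geo (l i))) := by
    rw [rser, Finset.mul_sum, Finset.mul_sum]
    apply Finset.sum_congr rfl
    intro i _
    ring
  rw [step1]
  apply Finset.sum_congr rfl
  intro i _
  have hsplit : P n l =
      (1 - C (l i) * X) * ∏ j ∈ Finset.univ.erase i, (1 - C (l j) * X) := by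
    rw [P]
    exact (Finset.mul_prod_erase Finset.univ _ (Finset.mem_univ i)).symm
  have hthis : P n l * geo (l i) = ∏ j ∈ Finset.univ.erase i, (1 - C (l j) * X) := by
    rw [hsplit]
    calc (1 - C (l i) * X) * (∏ j ∈ Finset.univ.erase i, (1 - C (l j) * X)) * geo (l i)
        = ((1 - C (l i) * X) * geo (l i)) * ∏ j ∈ Finset.univ.erase i, (1 - C (l j) * X) := by
          ring
      _ = ∏ j ∈ Finset.univ.erase i, (1 - C (l j) * X) := by rw [geo_mul]; ring
  rw [hthis, ← mul_assoc, ← map_mul]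
  congr 2
  ring

lemma natCast_ne_zero (hn : 0 < n) : ((n : PowerSeries ℝ)) ≠ 0 := by
  intro h0
  have := congrArg constantCoeff h0
  simp at this
  omega

lemma h_ode (hn : 0 < n) (h : PowerSeries ℝ)
    (hpow : h ^ n = P n l) :
    d⁄dX ℝ h = -(rser n l * h) := by
  have hdP : d⁄dX ℝ (P n l)
      = -∑ i, C (l i) * ∏ j ∈ Finset.univ.erase i, (1 - C (l j) * X) := by
    rw [P]; exact dProd Finset.univ l
  have hS : (n : PowerSeries ℝ) * (P n l * rser n l)
      = ∑ i, C (l i) * ∏ j ∈ Finset.univ.erase i, (1 - C (l j) * X) := by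
    rw [P_mul_r n l hn, Finset.mul_sum]
    apply Finset.sum_congr rfl
    intro i _
    rw [← mul_assoc]
    congr 1
    rw [← map_natCast C n, ← map_mul]
    congr 1
    field_simp
  have hd : (n : PowerSeries ℝ) * (h ^ (n-1) * d⁄dX ℝ h) = d⁄dX ℝ (P n l) := by
    rw [← hpow, Derivation.leibniz_pow]
    simp only [smul_eq_mul, nsmul_eq_mul]
  have hmul : (n : PowerSeries ℝ) * (P n l * d⁄dX ℝ h)
      = -((n : PowerSeries ℝ) * (P n l * (rser n l * h))) := by
    have e1 : h ^ (n-1) * h = h ^ n := by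
      rw [← pow_succ]
      congr 1
      omega
    have e2 : (n : PowerSeries ℝ) * (h ^ (n-1) * d⁄dX ℝ h) * h = d⁄dX ℝ (P n l) * h := by
      rw [hd]
    calc (n : PowerSeries ℝ) * (P n l * d⁄dX ℝ h)
        = (n : PowerSeries ℝ) * (h ^ (n-1) * d⁄dX ℝ h) * h := by
          rw [← hpow, ← e1]
          ring
      _ = d⁄dX ℝ (P n l) * h := e2
      _ = -((∑ i, C (l i) * ∏ j ∈ Finset.univ.erase i, (1 - C (l j) * X)) * h) := by
          rw [hdP]; ring
      _ = -((n : PowerSeries ℝ) * (P n l * (rser n l * h))) := by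
          rw [← hS]; ring
  have hcancel : P n l * d⁄dX ℝ h = -(P n l * (rser n l * h)) := by
    have := hmul
    rw [← mul_neg] at this
    exact mul_left_cancel₀ (natCast_ne_zero n hn) this
  have : P n l * d⁄dX ℝ h = P n l * (-(rser n l * h)) := by
    rw [hcancel]; ring
  exact mul_left_cancel₀ (P_ne_zero n l) this

lemma coeff_rser (hn : 0 < n) (j : ℕ) :
    coeff j (rser n l) = pp n l (j+1) / n := by
  rw [rser, coeff_C_mul, map_sum]
  have : ∀ i : Fin n, coeff j (C (l i) * geo (l i)) = l i ^ (j+1) := by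
    intro i
    rw [coeff_C_mul, geo, coeff_mk, pow_succ']
  rw [Finset.sum_congr rfl (fun i _ => this i), pp]
  field_simp

end Main

end Stmt6Aux

open Stmt6Aux in
theorem stmt6 (n : ℕ) (hn : 0 < n) (l : Fin n → ℝ) (hl : ∀ i, 0 < l i)
    (h : PowerSeries ℝ) (h1 : PowerSeries.constantCoeff h = 1)
    (hpow : h ^ n = ∏ i, (1 - PowerSeries.C (l i) * PowerSeries.X)) :
    ∀ k, 1 ≤ k → 0 ≤ PowerSeries.coeff k (1 - h) := by
  have hpow' : h ^ n = P n l := hpow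
  have hode := h_ode n l hn h hpow'
  set ρ : ℕ → ℝ := fun j => pp n l (j+1) / n with hρdef
  set b : ℕ → ℝ := fun m => -(coeff m h) with hbdef
  have hρ : ∀ j, 0 < ρ j := by
    intro j
    have := pp_pos n l hn hl (j+1)
    have : (0:ℝ) < n := by positivity
    simp only [hρdef]
    positivity
  have hA1 : ∀ a c, ρ a * ρ c ≤ ρ (a + c + 1) := by
    intro a c
    simp only [hρdef]
    have key := cheb1 n l hl (a+1) (c+1)
    have hnp : (0:ℝ) < n := by positivity
    have e : a + 1 + (c + 1) = a + c + 1 + 1 := by omega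
    rw [e] at key
    rw [div_mul_div_comm, div_le_div_iff₀ (by positivity) hnp]
    nlinarith [key]
  have hA2 : ∀ a c, c ≤ a → ρ a * ρ (c + 1) ≤ ρ (a + 1) * ρ c := by
    intro a c hca
    simp only [hρdef]
    have key := cheb2 n l hl (a+1) (c+1) (by omega)
    have hnp : (0:ℝ) < n := by positivity
    rw [div_mul_div_comm, div_mul_div_comm, div_le_div_iff₀ (by positivity) (by positivity)]
    have e1 : c + 1 + 1 = c + 2 := by omega
    have e2 : a + 1 + 1 = a + 2 := by omega
    rw [e1, e2]
    have e3 : c + 1 + 1 = c + 2 := by omega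
    rw [e3] at key
    nlinarith [key]
  have hrec : ∀ k : ℕ, ((k : ℝ) + 1) * b (k + 1)
      = ρ k - ∑ j ∈ Finset.range k, ρ j * b (k - j) := by
    intro k
    have hc := congrArg (fun g => coeff k g) hode
    rw [PowerSeries.coeff_derivative] at hc
    have hrhs : coeff k (-(rser n l * h))
        = -∑ j ∈ Finset.range (k+1), ρ j * coeff (k - j) h := by
      rw [map_neg, PowerSeries.coeff_mul]
      rw [Finset.Nat.sum_antidiagonal_eq_sum_range_succ_mk]
      congr 1
      apply Finset.sum_congr rfl
      intro j _
      rw [coeff_rser n l hn j]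
    rw [hrhs] at hc
    have hsplit : ∑ j ∈ Finset.range (k+1), ρ j * coeff (k - j) h
        = ∑ j ∈ Finset.range k, ρ j * coeff (k - j) h + ρ k * 1 := by
      rw [Finset.sum_range_succ]
      congr 2
      rw [Nat.sub_self]
      rw [← coeff_zero_eq_constantCoeff_apply] at h1
      exact h1
    rw [hsplit] at hc
    have hbc : ∀ j ∈ Finset.range k, ρ j * coeff (k - j) h = -(ρ j * b (k - j)) := by
      intro j _
      simp only [hbdef]
      ring
    rw [Finset.sum_congr rfl hbc, Finset.sum_neg_distrib] at hc
    simp only [hbdef]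
    push_cast at hc ⊢
    linarith [hc]
  have hfinal := seq_bpos ρ b hρ hA1 hA2 hrec
  intro k hk
  obtain ⟨m, rfl⟩ : ∃ m, k = m + 1 := ⟨k - 1, by omega⟩
  rw [map_sub]
  have hone : coeff (m+1) (1 : PowerSeries ℝ) = 0 := by
    rw [PowerSeries.coeff_one]
    simp
  rw [hone]
  have := hfinal m
  simp only [hbdef] at this
  linarith
end

section
/- Let f(t) = ∏_{i=1}^n (1 - λ_i t) where λ_1,…,λ_n are complex numbers, and let s_k = ∑_{i=1}^n λ_i^k. If there exists a positive integer N such that the formal power series 1 - f(t)^{1/N} has all coefficients (in degrees ≥ 1) real and nonnegative, then s_k ≥ 0 for all positive integers k. -/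
open PowerSeries

namespace Stmt7Aux

/-- Predicate: nonnegative real complex number. -/
def P (z : ℂ) : Prop := z.im = 0 ∧ 0 ≤ z.re

lemma P_zero : P 0 := by simp [P]

lemma P_one : P 1 := by simp [P]

lemma P_add {x y : ℂ} (hx : P x) (hy : P y) : P (x + y) :=
  ⟨by simp [Complex.add_im, hx.1, hy.1], by
    simpa [Complex.add_re] using add_nonneg hx.2 hy.2⟩

lemma P_mul {x y : ℂ} (hx : P x) (hy : P y) : P (x * y) := by
  refine ⟨by simp [Complex.mul_im, hx.1, hy.1], ?_⟩
  simp only [Complex.mul_re, hx.1, hy.1]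
  simpa using mul_nonneg hx.2 hy.2

lemma P_sum {ι : Type*} {s : Finset ι} {f : ι → ℂ} (hf : ∀ i ∈ s, P (f i)) :
    P (∑ i ∈ s, f i) := by
  classical
  induction s using Finset.induction with
  | empty => simpa using P_zero
  | insert _ _ hns ih =>
      rw [Finset.sum_insert hns]
      exact P_add (hf _ (Finset.mem_insert_self _ _))
        (ih fun i hi => hf i (Finset.mem_insert_of_mem hi))

lemma P_nat (m : ℕ) : P (m : ℂ) := by
  constructor <;> simp

/-- The geometric series `∑ a^m X^m` is the inverse of `1 - C a X`. -/
lemma geom_inv (a : ℂ) :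
    (1 - C a * X) * PowerSeries.mk (fun m => a ^ m) = 1 := by
  have key : PowerSeries.mk (fun m => a ^ m) =
      1 + (C a * X) * PowerSeries.mk (fun m => a ^ m) := by
    ext k
    cases k with
    | zero => simp
    | succ k =>
        rw [map_add, show ((C a * X) * PowerSeries.mk fun m => a ^ m) =
            (C a * PowerSeries.mk fun m => a ^ m) * X by ring,
          PowerSeries.coeff_succ_mul_X, PowerSeries.coeff_C_mul, coeff_mk, coeff_mk,
          PowerSeries.coeff_one, if_neg (Nat.succ_ne_zero k), zero_add, pow_succ']
  nth_rewrite 1 [sub_mul, key]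
  ring

lemma key_prod (n : ℕ) (l : Fin n → ℂ) (s : Finset (Fin n)) :
    (∏ i ∈ s, (1 - C (l i) * X)) *
      (∑ i ∈ s, C (l i) * PowerSeries.mk (fun m => l i ^ m))
    = -(d⁄dX ℂ (∏ i ∈ s, (1 - C (l i) * X))) := by
  classical
  induction s using Finset.induction with
  | empty => simp
  | @insert a s hns ih =>
      rw [Finset.prod_insert hns, Finset.sum_insert hns]
      have dfa : d⁄dX ℂ (1 - C (l a) * X) = -(C (l a)) := by
        rw [map_sub, Derivation.map_one_eq_zero, Derivation.leibniz]
        simp [smul_eq_mul]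
      have hgeom := geom_inv (l a)
      have leib : d⁄dX ℂ ((1 - C (l a) * X) * ∏ i ∈ s, (1 - C (l i) * X)) =
          (1 - C (l a) * X) * d⁄dX ℂ (∏ i ∈ s, (1 - C (l i) * X)) +
          (∏ i ∈ s, (1 - C (l i) * X)) * (-(C (l a))) := by
        rw [Derivation.leibniz, dfa]; simp [smul_eq_mul]
      rw [leib]
      have expand : (1 - C (l a) * X) * (∏ i ∈ s, (1 - C (l i) * X)) *
          (C (l a) * PowerSeries.mk (fun m => l a ^ m) +
            ∑ i ∈ s, C (l i) * PowerSeries.mk (fun m => l i ^ m))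
          = (∏ i ∈ s, (1 - C (l i) * X)) *
              (((1 - C (l a) * X) * PowerSeries.mk (fun m => l a ^ m)) * C (l a)) +
            (1 - C (l a) * X) *
              ((∏ i ∈ s, (1 - C (l i) * X)) *
                (∑ i ∈ s, C (l i) * PowerSeries.mk (fun m => l i ^ m))) := by
        ring
      rw [expand, hgeom, ih]
      ring

end Stmt7Aux

open Stmt7Aux in
theorem stmt7 (n : ℕ) (l : Fin n → ℂ) (N : ℕ) (hN : 0 < N)
    (h : PowerSeries ℂ) (h1 : PowerSeries.constantCoeff h = 1)
    (hpow : h ^ N = ∏ i, (1 - PowerSeries.C (l i) * PowerSeries.X))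
    (hcoef : ∀ k, 1 ≤ k → (PowerSeries.coeff k (1 - h)).im = 0 ∧
        0 ≤ (PowerSeries.coeff k (1 - h)).re) :
    ∀ k : ℕ, 1 ≤ k → (∑ i, l i ^ k).im = 0 ∧ 0 ≤ (∑ i, l i ^ k).re := by
  classical
  set g : PowerSeries ℂ := 1 - h with hg
  have hPg : ∀ k, 1 ≤ k → P (PowerSeries.coeff k g) := fun k hk => hcoef k hk
  have hg0 : PowerSeries.constantCoeff g = 0 := by simp [hg, h1]
  have hc0 : PowerSeries.constantCoeff h ≠ 0 := by rw [h1]; exact one_ne_zero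
  have hne : h ≠ 0 := fun hh => hc0 (by simp [hh])
  -- the generating series A of power sums
  set A : PowerSeries ℂ := ∑ i, C (l i) * PowerSeries.mk (fun m => l i ^ m) with hA
  have key := key_prod n l Finset.univ
  rw [← hpow] at key
  -- derivative of h ^ N
  have dpow : d⁄dX ℂ (h ^ N) = N • (h ^ (N - 1) * d⁄dX ℂ h) := by
    rw [Derivation.leibniz_pow]; simp [smul_eq_mul]
  rw [dpow] at key
  -- cancel h^(N-1)
  have hNsub : N = (N - 1) + 1 := (Nat.succ_pred_eq_of_pos hN).symm
  have cancel : h ^ (N - 1) * (h * A) = h ^ (N - 1) * (-(N • d⁄dX ℂ h)) := by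
    have hps : h ^ N = h ^ (N - 1) * h := by
      conv_lhs => rw [hNsub]
      rw [pow_succ]
    calc h ^ (N - 1) * (h * A) = h ^ N * A := by rw [hps]; ring
    _ = -(N • (h ^ (N - 1) * d⁄dX ℂ h)) := key
    _ = h ^ (N - 1) * (-(N • d⁄dX ℂ h)) := by
        rw [mul_neg, mul_smul_comm]
  have hpowne : h ^ (N - 1) ≠ 0 := pow_ne_zero _ hne
  have main : h * A = -(N • d⁄dX ℂ h) := mul_left_cancel₀ hpowne cancel
  have dg : d⁄dX ℂ g = -(d⁄dX ℂ h) := by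
    rw [hg, map_sub, Derivation.map_one_eq_zero]; ring
  have main2 : h * A = N • d⁄dX ℂ g := by rw [dg, smul_neg, main]
  -- A = h⁻¹ * (N • dg)
  have hinv : h⁻¹ * h = 1 := PowerSeries.inv_mul_cancel h hc0
  have hAeq : A = h⁻¹ * (N • d⁄dX ℂ g) := by
    calc A = (h⁻¹ * h) * A := by rw [hinv, one_mul]
    _ = h⁻¹ * (h * A) := by ring
    _ = h⁻¹ * (N • d⁄dX ℂ g) := by rw [main2]
  -- coefficients of h⁻¹ are nonnegative reals
  have hinv_rec : h⁻¹ = 1 + g * h⁻¹ := by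
    have hu1 : h * h⁻¹ = 1 := PowerSeries.mul_inv_cancel h hc0
    have hu2 : (1 - g) * h⁻¹ = 1 := by
      rw [hg, sub_sub_cancel]; exact hu1
    rw [sub_mul, one_mul] at hu2
    linear_combination hu2
  have hPinv : ∀ k, P (PowerSeries.coeff k h⁻¹) := by
    intro k
    induction k using Nat.strong_induction_on with
    | _ k ih =>
      rw [hinv_rec, map_add, PowerSeries.coeff_mul]
      refine P_add ?_ (P_sum ?_)
      · rcases Nat.eq_zero_or_pos k with rfl | hk
        · simpa using P_one
        · rw [PowerSeries.coeff_one, if_neg (Nat.pos_iff_ne_zero.mp hk)]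
          exact P_zero
      · rintro ⟨i, j⟩ hij
        rw [Finset.HasAntidiagonal.mem_antidiagonal] at hij
        rcases Nat.eq_zero_or_pos i with rfl | hi
        · simp only []
          rw [show (PowerSeries.coeff 0) g = 0 from by
            simpa [PowerSeries.coeff_zero_eq_constantCoeff] using hg0]
          simpa using P_zero
        · have hj : j < k := by omega
          exact P_mul (hPg i hi) (ih j hj)
  -- coefficients of N • dg are nonnegative reals
  have hPdg : ∀ m, P (PowerSeries.coeff m (N • d⁄dX ℂ g)) := by
    intro m
    rw [map_nsmul, nsmul_eq_mul, PowerSeries.coeff_derivative]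
    exact P_mul (P_nat N)
      (P_mul (hPg (m + 1) (Nat.le_add_left 1 m)) (P_add (P_nat m) P_one))
  -- coefficients of A are nonnegative reals
  have hPA : ∀ m, P (PowerSeries.coeff m A) := by
    intro m
    rw [hAeq, PowerSeries.coeff_mul]
    exact P_sum fun p _ => P_mul (hPinv p.1) (hPdg p.2)
  -- identify coefficients of A with power sums
  intro k hk
  have : (∑ i, l i ^ k) = PowerSeries.coeff (k - 1) A := by
    rw [hA, map_sum]
    refine Finset.sum_congr rfl fun i _ => ?_
    rw [PowerSeries.coeff_C_mul, coeff_mk, ← pow_succ']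
    congr 1
    omega
  rw [this]
  exact hPA (k - 1)
end

section
/- Let f_n(t) = det(I_n - t X_n) where X_n is the structured matrix with first column (x_1,…,x_n)^T, superdiagonal 1,…,n-1, and entries x_{i-j+1} for j ≤ i. Then for each n ≥ 1, the formal power series expansion of f_{n-1}(t)/f_n(t) around t = 0 is monomially positive: every coefficient of every monomial t^j x_1^{α_1}⋯x_n^{α_n} is nonnegative. -/
open Matrix Polynomial PowerSeries

/-- `f_n(t) = det(I_n - t X_n)` as a formal power series. -/
noncomputable def fps (R : Type*) [CommRing R] (x : ℕ → R) (n : ℕ) : PowerSeries R :=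
  Matrix.det (1 - (PowerSeries.X : PowerSeries R) • (Xmat R n x).map (PowerSeries.C (R := R)))

/-- A power series over `ℝ[x_1,x_2,…]` is monomially positive if every real coefficient
of every monomial `t^j x^α` is nonnegative. -/
def MonPos (F : PowerSeries (MvPolynomial ℕ ℝ)) : Prop :=
  ∀ (j : ℕ) (d : ℕ →₀ ℕ), 0 ≤ MvPolynomial.coeff d (PowerSeries.coeff j F)

section aux

variable {R : Type*} [CommRing R]

/-- The matrix `I - t X_n` over power series. -/
noncomputable def Mmat (n : ℕ) (x : ℕ → R) : Matrix (Fin n) (Fin n) (PowerSeries R) :=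
  1 - (PowerSeries.X : PowerSeries R) • (Xmat R n x).map (PowerSeries.C (R := R))

/-- The inverse matrix `Σ_k t^k X_n^k`. -/
noncomputable def Nmat (n : ℕ) (x : ℕ → R) : Matrix (Fin n) (Fin n) (PowerSeries R) :=
  fun i j => PowerSeries.mk (fun k => ((Xmat R n x) ^ k) i j)

lemma fps_eq (n : ℕ) (x : ℕ → R) : fps R x n = (Mmat n x).det := rfl

lemma Mmat_mul_Nmat (n : ℕ) (x : ℕ → R) : Mmat n x * Nmat n x = 1 := by
  ext i j m
  rw [Mmat, Matrix.sub_mul, Matrix.one_mul, Matrix.smul_mul, Matrix.sub_apply,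
    Matrix.smul_apply]
  cases m with
  | zero =>
    simp only [map_sub, smul_eq_mul, PowerSeries.coeff_zero_eq_constantCoeff, _root_.map_mul,
      constantCoeff_X, zero_mul, sub_zero, Nmat, PowerSeries.coeff_mk, pow_zero]
    by_cases h : i = j <;> simp [Matrix.one_apply, h]
  | succ m =>
    simp only [map_sub, smul_eq_mul, PowerSeries.coeff_succ_X_mul, Nmat, PowerSeries.coeff_mk,
      Matrix.mul_apply, map_sum, Matrix.map_apply, PowerSeries.coeff_C_mul]
    have h1 : ((Xmat R n x) ^ (m + 1)) i j
        = ∑ k, Xmat R n x i k * ((Xmat R n x) ^ m) k j := by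
      rw [pow_succ']; rfl
    rw [h1, sub_eq_iff_eq_add]
    have h2 : ((1 : Matrix (Fin n) (Fin n) (PowerSeries R)) i j) =
        PowerSeries.C (R := R) ((1 : Matrix (Fin n) (Fin n) R) i j) := by
      by_cases h : i = j <;> simp [Matrix.one_apply, h]
    rw [h2, PowerSeries.coeff_C]
    simp

lemma adjugate_Mmat (n : ℕ) (x : ℕ → R) :
    (Mmat n x).adjugate = (Mmat n x).det • Nmat n x := by
  have h := Mmat_mul_Nmat n x
  calc (Mmat n x).adjugate = (Mmat n x).adjugate * (Mmat n x * Nmat n x) := by rw [h, mul_one]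
    _ = ((Mmat n x).adjugate * Mmat n x) * Nmat n x := by rw [mul_assoc]
    _ = ((Mmat n x).det • (1 : Matrix (Fin n) (Fin n) (PowerSeries R))) * Nmat n x := by
        rw [Matrix.adjugate_mul]
    _ = (Mmat n x).det • Nmat n x := by rw [Matrix.smul_mul, Matrix.one_mul]

lemma Mmat_submatrix (m : ℕ) (x : ℕ → R) :
    (Mmat (m + 1) x).submatrix Fin.castSucc Fin.castSucc = Mmat m x := by
  ext i j : 2
  simp only [Mmat, Matrix.submatrix_apply, Matrix.sub_apply, Matrix.smul_apply,
    Matrix.map_apply, Matrix.one_apply, Fin.castSucc_inj]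
  have : Xmat R (m + 1) x i.castSucc j.castSucc = Xmat R m x i j := by
    simp [Xmat]
  rw [this]

lemma adjugate_last (m : ℕ) (x : ℕ → R) :
    (Mmat (m + 1) x).adjugate (Fin.last m) (Fin.last m) = fps R x m := by
  rw [Matrix.adjugate_apply, Matrix.det_succ_row _ (Fin.last m)]
  rw [Finset.sum_eq_single (Fin.last m)]
  · have hrow : ((Mmat (m + 1) x).updateRow (Fin.last m) (Pi.single (Fin.last m) 1))
        (Fin.last m) (Fin.last m) = 1 := by
      rw [Matrix.updateRow_self]; simp
    have hsub : ((Mmat (m + 1) x).updateRow (Fin.last m)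
          (Pi.single (Fin.last m) 1)).submatrix (Fin.last m).succAbove (Fin.last m).succAbove
        = Mmat m x := by
      rw [← Mmat_submatrix m x]
      ext i j : 2
      simp [Fin.succAbove_last, (Fin.castSucc_lt_last i).ne]
    rw [hrow, hsub, fps_eq]
    simp only [Fin.val_last, mul_one, ← mul_pow]
    norm_num
  · intro b _ hb
    have : ((Mmat (m + 1) x).updateRow (Fin.last m) (Pi.single (Fin.last m) 1))
        (Fin.last m) b = 0 := by
      rw [Matrix.updateRow_self]; simp [Pi.single_apply, hb]
    rw [this]; ring
  · simp

lemma key (m : ℕ) (x : ℕ → R) :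
    fps R x m = fps R x (m + 1) * Nmat (m + 1) x (Fin.last m) (Fin.last m) := by
  rw [← adjugate_last m x, adjugate_Mmat, Matrix.smul_apply, smul_eq_mul, fps_eq]

lemma constantCoeff_fps (n : ℕ) (x : ℕ → R) :
    PowerSeries.constantCoeff (fps R x n) = 1 := by
  rw [fps_eq, RingHom.map_det, RingHom.mapMatrix_apply]
  have : (Mmat n x).map (PowerSeries.constantCoeff (R := R)) = 1 := by
    ext i j : 2
    simp [Mmat, Matrix.map_apply, Matrix.one_apply, smul_eq_mul]
  rw [this, Matrix.det_one]

/-- The ratio is the generating function of `(X^k)_{nn}`. -/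
lemma ratio_eq (m : ℕ) (x : ℕ → R) :
    fps R x m * PowerSeries.invOfUnit (fps R x (m + 1)) 1 =
      Nmat (m + 1) x (Fin.last m) (Fin.last m) := by
  have hu : fps R x (m + 1) * PowerSeries.invOfUnit (fps R x (m + 1)) 1 = 1 :=
    PowerSeries.mul_invOfUnit _ 1 (by rw [constantCoeff_fps]; rfl)
  rw [key m x, mul_right_comm, hu, one_mul]

end aux

/-- Nonnegative coefficients predicate. -/
def NN (p : MvPolynomial ℕ ℝ) : Prop := ∀ d, 0 ≤ MvPolynomial.coeff d p

lemma NN.add {p q} (hp : NN p) (hq : NN q) : NN (p + q) := fun d => by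
  rw [MvPolynomial.coeff_add]; exact add_nonneg (hp d) (hq d)

lemma NN.mul {p q} (hp : NN p) (hq : NN q) : NN (p * q) := fun d => by
  rw [MvPolynomial.coeff_mul]
  exact Finset.sum_nonneg fun c _ => mul_nonneg (hp _) (hq _)

lemma NN.sum {s : Finset (Fin n)} {f : Fin n → MvPolynomial ℕ ℝ}
    (h : ∀ i ∈ s, NN (f i)) : NN (∑ i ∈ s, f i) := fun d => by
  rw [MvPolynomial.coeff_sum]
  exact Finset.sum_nonneg fun i hi => h i hi d

lemma NN_Xmat (n : ℕ) (i j : Fin n) : NN (Xmat (MvPolynomial ℕ ℝ) n MvPolynomial.X i j) := by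
  intro d
  rw [Xmat]
  split
  · rw [MvPolynomial.coeff_X']; split <;> norm_num
  · split
    · rw [Nat.cast_add, Nat.cast_one]
      have : (((i : ℕ) : MvPolynomial ℕ ℝ) + 1) = MvPolynomial.C (((i : ℕ) : ℝ) + 1) := by
        simp
      rw [this, MvPolynomial.coeff_C]
      split <;> positivity
    · simp

lemma NN_pow (n k : ℕ) (i j : Fin n) :
    NN ((Xmat (MvPolynomial ℕ ℝ) n MvPolynomial.X ^ k) i j) := by
  induction k generalizing i j with
  | zero =>
    intro d
    simp only [pow_zero]
    by_cases h : i = j <;> simp [Matrix.one_apply, h, MvPolynomial.coeff_one]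
    split <;> norm_num
  | succ k ih =>
    rw [pow_succ]
    have : (Xmat (MvPolynomial ℕ ℝ) n MvPolynomial.X ^ k *
        Xmat (MvPolynomial ℕ ℝ) n MvPolynomial.X) i j
        = ∑ l, (Xmat (MvPolynomial ℕ ℝ) n MvPolynomial.X ^ k) i l *
            Xmat (MvPolynomial ℕ ℝ) n MvPolynomial.X l j := rfl
    rw [this]
    exact NN.sum fun l _ => (ih i l).mul (NN_Xmat n l j)

theorem stmt10 (n : ℕ) (hn : 1 ≤ n) :
    MonPos ((fps (MvPolynomial ℕ ℝ) MvPolynomial.X (n - 1)) *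
      PowerSeries.invOfUnit (fps (MvPolynomial ℕ ℝ) MvPolynomial.X n) 1) := by
  obtain ⟨m, rfl⟩ : ∃ m, n = m + 1 := ⟨n - 1, by omega⟩
  rw [Nat.add_sub_cancel, ratio_eq]
  intro j d
  rw [Nmat, PowerSeries.coeff_mk]
  exact NN_pow (m + 1) j (Fin.last m) (Fin.last m) d
end

section
/- Let t_k(n) = (1/n) trace(X_n^k) be the normalized power traces of the structured matrix X_n. Then t_k(n) - t_k(n-1) is a polynomial in x_1,…,x_n with nonnegative real coefficients, for all k ≥ 1 and n ≥ 2. -/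
open Matrix Polynomial PowerSeries

namespace Stmt12Aux

abbrev R' : Type := MvPolynomial ℕ ℝ

noncomputable def A (n : ℕ) : Matrix (Fin n) (Fin n) R' := Xmat R' n MvPolynomial.X

/-- Nonnegative coefficients predicate. -/
def NN (p : R') : Prop := ∀ d : ℕ →₀ ℕ, 0 ≤ MvPolynomial.coeff d p

lemma NN_entry (n : ℕ) (i j : Fin n) : NN (A n i j) := by
  intro d
  show 0 ≤ MvPolynomial.coeff d (Xmat R' n MvPolynomial.X i j)
  unfold Xmat
  split_ifs with h1 h2
  · rw [MvPolynomial.coeff_X']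
    split_ifs <;> norm_num
  · rw [← MvPolynomial.C_eq_coe_nat, MvPolynomial.coeff_C]
    split_ifs <;> positivity
  · simp

lemma entry_cast (n : ℕ) (i j : Fin n) :
    A (n + 1) i.castSucc j.castSucc = A n i j := rfl

lemma entry_le (n : ℕ) (i j : Fin n) (d : ℕ →₀ ℕ) :
    MvPolynomial.coeff d (A n i j) ≤ MvPolynomial.coeff d (A (n + 1) i.succ j.succ) := by
  show MvPolynomial.coeff d (Xmat R' n MvPolynomial.X i j)
    ≤ MvPolynomial.coeff d (Xmat R' (n+1) MvPolynomial.X i.succ j.succ)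
  unfold Xmat
  simp only [Fin.val_succ]
  by_cases h1 : (j : ℕ) ≤ (i : ℕ)
  · rw [if_pos h1, if_pos (by omega : (j : ℕ) + 1 ≤ (i : ℕ) + 1)]
    rw [show (i : ℕ) + 1 - ((j : ℕ) + 1) = (i : ℕ) - (j : ℕ) from by omega]
  · rw [if_neg h1, if_neg (by omega : ¬ ((j : ℕ) + 1 ≤ (i : ℕ) + 1))]
    by_cases h2 : (j : ℕ) = (i : ℕ) + 1
    · rw [if_pos h2, if_pos (by omega : (j : ℕ) + 1 = (i : ℕ) + 1 + 1)]
      rw [← MvPolynomial.C_eq_coe_nat, ← MvPolynomial.C_eq_coe_nat,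
        MvPolynomial.coeff_C, MvPolynomial.coeff_C]
      split_ifs
      · push_cast; linarith
      · exact le_refl 0
    · rw [if_neg h2, if_neg (by omega : ¬ ((j : ℕ) + 1 = (i : ℕ) + 1 + 1))]

lemma NN_mul {p q : R'} (hp : NN p) (hq : NN q) : NN (p * q) := by
  intro d
  rw [MvPolynomial.coeff_mul]
  exact Finset.sum_nonneg fun x _ => mul_nonneg (hp _) (hq _)

lemma coeff_mul_le {p q r s : R'} (hp : NN p) (hr : NN r)
    (hpq : ∀ d, MvPolynomial.coeff d p ≤ MvPolynomial.coeff d q)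
    (hrs : ∀ d, MvPolynomial.coeff d r ≤ MvPolynomial.coeff d s) (d : ℕ →₀ ℕ) :
    MvPolynomial.coeff d (p * r) ≤ MvPolynomial.coeff d (q * s) := by
  rw [MvPolynomial.coeff_mul, MvPolynomial.coeff_mul]
  apply Finset.sum_le_sum
  intro x _
  exact mul_le_mul (hpq _) (hrs _) (hr _) (le_trans (hp _) (hpq _))

lemma NN_prod {ι : Type*} (t : Finset ι) (f : ι → R') (hf : ∀ i ∈ t, NN (f i)) :
    NN (∏ i ∈ t, f i) := by
  classical
  induction t using Finset.induction_on with
  | empty => intro d; simp [MvPolynomial.coeff_one]; split_ifs <;> norm_num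
  | insert _ _ hx ih =>
    rename_i a t'
    rw [Finset.prod_insert hx]
    exact NN_mul (hf a (Finset.mem_insert_self a t'))
      (ih fun i hi => hf i (Finset.mem_insert_of_mem hi))

lemma coeff_prod_le {ι : Type*} (t : Finset ι) (f g : ι → R')
    (hf : ∀ i ∈ t, NN (f i)) (hg : ∀ i ∈ t, NN (g i))
    (hle : ∀ i ∈ t, ∀ d, MvPolynomial.coeff d (f i) ≤ MvPolynomial.coeff d (g i)) :
    ∀ d : ℕ →₀ ℕ,
      MvPolynomial.coeff d (∏ i ∈ t, f i) ≤ MvPolynomial.coeff d (∏ i ∈ t, g i) := by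
  classical
  induction t using Finset.induction_on with
  | empty => intro d; simp
  | insert _ _ hx ih =>
    rename_i a t'
    intro d
    rw [Finset.prod_insert hx, Finset.prod_insert hx]
    exact coeff_mul_le (hf a (Finset.mem_insert_self a t'))
      (NN_prod t' f fun i hi => hf i (Finset.mem_insert_of_mem hi))
      (hle a (Finset.mem_insert_self a t'))
      (ih (fun i hi => hf i (Finset.mem_insert_of_mem hi))
        (fun i hi => hg i (Finset.mem_insert_of_mem hi))
        (fun i hi => hle i (Finset.mem_insert_of_mem hi))) d

/-- walk-sum expansion of matrix power entries -/
lemma pow_apply_walk {N : ℕ} (B : Matrix (Fin N) (Fin N) R') :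
    ∀ (m : ℕ) (i j : Fin N), (B ^ (m + 1)) i j =
      ∑ c : Fin m → Fin N, ∏ s : Fin (m + 1),
        B ((Fin.cons i (Fin.snoc c j) : Fin (m + 2) → Fin N) s.castSucc)
          ((Fin.cons i (Fin.snoc c j) : Fin (m + 2) → Fin N) s.succ) := by
  intro m
  induction m with
  | zero =>
    intro i j
    rw [pow_one, Fintype.sum_subsingleton _ (Fin.elim0 : Fin 0 → Fin N)]
    simp [Fin.snoc, Fin.cons]
  | succ m ih =>
    intro i j
    rw [pow_succ', Matrix.mul_apply]
    simp_rw [ih, Finset.mul_sum]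
    rw [← (Fin.consEquiv (fun _ : Fin (m+1) => Fin N)).sum_comp
      (fun c => ∏ s : Fin (m + 2),
        B ((Fin.cons i (Fin.snoc c j) : Fin (m + 3) → Fin N) s.castSucc)
          ((Fin.cons i (Fin.snoc c j) : Fin (m + 3) → Fin N) s.succ))]
    rw [Fintype.sum_prod_type]
    apply Finset.sum_congr rfl
    intro l _
    apply Finset.sum_congr rfl
    intro c _
    have hQ : (Fin.cons i (Fin.snoc (Fin.consEquiv (fun _ : Fin (m+1) => Fin N) (l, c)) j)
        : Fin (m + 3) → Fin N)
        = Fin.cons i (Fin.cons l (Fin.snoc c j)) := by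
      have h1 : (Fin.consEquiv (fun _ : Fin (m+1) => Fin N) (l, c)) = Fin.cons l c := rfl
      rw [h1, ← Fin.cons_snoc_eq_snoc_cons]
    rw [hQ]
    conv_rhs => rw [Fin.prod_univ_succ]
    congr 1

/-- closed-walk path function -/
def cpath (n m : ℕ) (p : Fin n × (Fin m → Fin n)) : Fin (m + 2) → Fin n :=
  Fin.cons p.1 (Fin.snoc p.2 p.1)

/-- walk weight -/
noncomputable def wt (n m : ℕ) (p : Fin n × (Fin m → Fin n)) : R' :=
  ∏ s : Fin (m + 1), A n (cpath n m p s.castSucc) (cpath n m p s.succ)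

lemma trace_pow (n m : ℕ) :
    Matrix.trace (A n ^ (m + 1)) = ∑ p : Fin n × (Fin m → Fin n), wt n m p := by
  rw [Fintype.sum_prod_type, Matrix.trace]
  apply Finset.sum_congr rfl
  intro i _
  rw [Matrix.diag, pow_apply_walk]
  rfl

lemma NN_wt (n m : ℕ) (p : Fin n × (Fin m → Fin n)) : NN (wt n m p) :=
  NN_prod _ _ fun s _ => NN_entry n _ _

/-- embed a walk via castSucc -/
def eMap (n m : ℕ) (p : Fin n × (Fin m → Fin n)) :
    Fin (n + 1) × (Fin m → Fin (n + 1)) :=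
  (p.1.castSucc, fun s => (p.2 s).castSucc)

/-- shift a walk up via succ -/
def sMap (n m : ℕ) (p : Fin n × (Fin m → Fin n)) :
    Fin (n + 1) × (Fin m → Fin (n + 1)) :=
  (p.1.succ, fun s => (p.2 s).succ)

lemma cpath_e (n m : ℕ) (p : Fin n × (Fin m → Fin n)) :
    cpath (n + 1) m (eMap n m p) = fun t => (cpath n m p t).castSucc := by
  show Fin.cons p.1.castSucc (Fin.snoc (fun s => (p.2 s).castSucc) p.1.castSucc)
    = Fin.castSucc ∘ Fin.cons p.1 (Fin.snoc p.2 p.1)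
  rw [Fin.comp_cons, Fin.comp_snoc]
  rfl

lemma cpath_s (n m : ℕ) (p : Fin n × (Fin m → Fin n)) :
    cpath (n + 1) m (sMap n m p) = fun t => (cpath n m p t).succ := by
  show Fin.cons p.1.succ (Fin.snoc (fun s => (p.2 s).succ) p.1.succ)
    = Fin.succ ∘ Fin.cons p.1 (Fin.snoc p.2 p.1)
  rw [Fin.comp_cons, Fin.comp_snoc]
  rfl

lemma wt_e (n m : ℕ) (p : Fin n × (Fin m → Fin n)) :
    wt (n + 1) m (eMap n m p) = wt n m p := by
  unfold wt
  rw [cpath_e]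
  apply Finset.prod_congr rfl
  intro s _
  exact entry_cast n _ _

lemma wt_s_le (n m : ℕ) (p : Fin n × (Fin m → Fin n)) (d : ℕ →₀ ℕ) :
    MvPolynomial.coeff d (wt n m p) ≤ MvPolynomial.coeff d (wt (n + 1) m (sMap n m p)) := by
  unfold wt
  rw [cpath_s]
  exact coeff_prod_le _ _ _ (fun s _ => NN_entry n _ _) (fun s _ => NN_entry (n+1) _ _)
    (fun s _ => entry_le n _ _) d

lemma eMap_inj (n m : ℕ) : Function.Injective (eMap n m) := by
  intro p q h
  unfold eMap at h
  have h1 : p.1.castSucc = q.1.castSucc := congrArg Prod.fst h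
  have h2 : (fun s => (p.2 s).castSucc) = fun s => (q.2 s).castSucc := congrArg Prod.snd h
  have hp1 : p.1 = q.1 := Fin.castSucc_injective n h1
  have hp2 : p.2 = q.2 := by
    funext s
    exact Fin.castSucc_injective n (congrFun h2 s)
  exact Prod.ext hp1 hp2

lemma sMap_inj (n m : ℕ) : Function.Injective (sMap n m) := by
  intro p q h
  unfold sMap at h
  have h1 : p.1.succ = q.1.succ := congrArg Prod.fst h
  have h2 : (fun s => (p.2 s).succ) = fun s => (q.2 s).succ := congrArg Prod.snd h
  have hp1 : p.1 = q.1 := Fin.succ_injective n h1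
  have hp2 : p.2 = q.2 := by
    funext s
    exact Fin.succ_injective n (congrFun h2 s)
  exact Prod.ext hp1 hp2

open Classical in
/-- walks in `Fin (n+1)` that hit the top level `Fin.last n` -/
noncomputable def H (n m : ℕ) : Finset (Fin (n + 1) × (Fin m → Fin (n + 1))) :=
  Finset.univ.filter (fun p => p.1 = Fin.last n ∨ ∃ s, p.2 s = Fin.last n)

lemma mem_H (n m : ℕ) (p : Fin (n + 1) × (Fin m → Fin (n + 1))) :
    p ∈ H n m ↔ (p.1 = Fin.last n ∨ ∃ s, p.2 s = Fin.last n) := by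
  classical
  simp [H]

lemma image_eMap (n m : ℕ) :
    Finset.image (eMap n m) Finset.univ = (H n m)ᶜ := by
  classical
  ext q
  simp only [Finset.mem_image, Finset.mem_compl, mem_H, Finset.mem_univ, true_and]
  constructor
  · rintro ⟨p, rfl⟩
    push_neg
    constructor
    · exact (Fin.castSucc_lt_last p.1).ne
    · intro s
      exact (Fin.castSucc_lt_last (p.2 s)).ne
  · intro hq
    push_neg at hq
    refine ⟨(q.1.castPred hq.1, fun s => (q.2 s).castPred (hq.2 s)), ?_⟩
    unfold eMap
    apply Prod.ext
    · exact Fin.castSucc_castPred q.1 hq.1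
    · funext s
      exact Fin.castSucc_castPred (q.2 s) (hq.2 s)

variable (m : ℕ) (d : ℕ →₀ ℕ)

/-- total coefficient sum over all closed walks -/
noncomputable def tcsum (n : ℕ) : ℝ :=
  ∑ p : Fin n × (Fin m → Fin n), MvPolynomial.coeff d (wt n m p)

/-- coefficient sum over walks hitting the top -/
noncomputable def S (n : ℕ) : ℝ :=
  ∑ p ∈ H n m, MvPolynomial.coeff d (wt (n + 1) m p)

lemma S_nonneg (n : ℕ) : 0 ≤ S m d n :=
  Finset.sum_nonneg fun p _ => NN_wt (n + 1) m p d

lemma tcsum_split (n : ℕ) : tcsum m d (n + 1) = tcsum m d n + S m d n := by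
  classical
  unfold tcsum S
  rw [← Finset.sum_add_sum_compl (H n m)]
  rw [add_comm]
  congr 1
  rw [← image_eMap n m, Finset.sum_image (fun x _ y _ h => eMap_inj n m h)]
  apply Finset.sum_congr rfl
  intro p _
  rw [wt_e]

set_option maxHeartbeats 1000000 in
lemma S_mono_succ (n : ℕ) : S m d n ≤ S m d (n + 1) := by
  classical
  unfold S
  calc ∑ p ∈ H n m, MvPolynomial.coeff d (wt (n + 1) m p)
      ≤ ∑ p ∈ H n m, MvPolynomial.coeff d (wt (n + 2) m (sMap (n + 1) m p)) :=
        Finset.sum_le_sum fun p _ => wt_s_le (n + 1) m p d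
    _ = ∑ q ∈ Finset.image (sMap (n + 1) m) (H n m),
          MvPolynomial.coeff d (wt (n + 2) m q) :=
        (Finset.sum_image (f := fun q => MvPolynomial.coeff d (wt (n + 2) m q))
          (s := H n m) (g := sMap (n + 1) m)
          (fun x _ y _ h => sMap_inj (n + 1) m h)).symm
    _ ≤ ∑ q ∈ H (n + 1) m, MvPolynomial.coeff d (wt (n + 2) m q) := by
        apply Finset.sum_le_sum_of_subset_of_nonneg
        · intro q hq
          rw [Finset.mem_image] at hq
          obtain ⟨p, hp, rfl⟩ := hq
          rw [mem_H] at hp ⊢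
          unfold sMap
          rcases hp with h | ⟨s, hs⟩
          · refine Or.inl ?_
            show p.1.succ = Fin.last (n + 1)
            rw [h]
            exact Fin.succ_last n
          · refine Or.inr ⟨s, ?_⟩
            show (p.2 s).succ = Fin.last (n + 1)
            rw [hs]
            exact Fin.succ_last n
        · intro q _ _
          exact NN_wt (n + 2) m q d

lemma S_mono {a b : ℕ} (hab : a ≤ b) : S m d a ≤ S m d b := by
  induction b, hab using Nat.le_induction with
  | base => exact le_refl _
  | succ b hb ih => exact le_trans ih (S_mono_succ m d b)

lemma tcsum_eq_sum_S (n : ℕ) : tcsum m d n = ∑ j ∈ Finset.range n, S m d j := by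
  induction n with
  | zero =>
    unfold tcsum
    rw [Finset.range_zero, Finset.sum_empty]
    apply Finset.sum_of_isEmpty
  | succ n ih =>
    rw [tcsum_split, ih, Finset.sum_range_succ]

lemma coeff_trace (n : ℕ) :
    MvPolynomial.coeff d (Matrix.trace (A n ^ (m + 1))) = tcsum m d n := by
  rw [trace_pow, MvPolynomial.coeff_sum]
  rfl

lemma key (m n' : ℕ) (d : ℕ →₀ ℕ) :
    ((n' + 1 : ℕ) : ℝ)⁻¹ * tcsum m d (n' + 1) ≤ ((n' + 2 : ℕ) : ℝ)⁻¹ * tcsum m d (n' + 2) := by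
  have hM : (0 : ℝ) < ((n' + 1 : ℕ) : ℝ) := by positivity
  have hN : (0 : ℝ) < ((n' + 2 : ℕ) : ℝ) := by positivity
  rw [inv_mul_eq_div, inv_mul_eq_div, div_le_div_iff₀ hM hN]
  have ha : tcsum m d (n' + 2) = tcsum m d (n' + 1) + S m d (n' + 1) := tcsum_split m d (n' + 1)
  have hb : tcsum m d (n' + 1) ≤ ((n' + 1 : ℕ) : ℝ) * S m d (n' + 1) := by
    rw [tcsum_eq_sum_S]
    calc ∑ j ∈ Finset.range (n' + 1), S m d j
        ≤ ∑ _j ∈ Finset.range (n' + 1), S m d (n' + 1) := by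
          apply Finset.sum_le_sum
          intro j hj
          exact S_mono m d (by
            rw [Finset.mem_range] at hj
            omega)
      _ = ((n' + 1 : ℕ) : ℝ) * S m d (n' + 1) := by
          rw [Finset.sum_const, Finset.card_range, nsmul_eq_mul]
  have hcast : ((n' + 2 : ℕ) : ℝ) = ((n' + 1 : ℕ) : ℝ) + 1 := by push_cast; ring
  rw [ha, hcast]
  nlinarith [S_nonneg m d (n' + 1), hM.le]

end Stmt12Aux

theorem stmt12 (n k : ℕ) (hn : 2 ≤ n) (hk : 1 ≤ k) (d : ℕ →₀ ℕ) :
    0 ≤ MvPolynomial.coeff d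
      (((n : ℝ)⁻¹) • Matrix.trace ((Xmat (MvPolynomial ℕ ℝ) n MvPolynomial.X) ^ k)
        - (((n - 1 : ℕ) : ℝ)⁻¹) •
            Matrix.trace ((Xmat (MvPolynomial ℕ ℝ) (n - 1) MvPolynomial.X) ^ k)) := by
  obtain ⟨m, rfl⟩ : ∃ m, k = m + 1 := ⟨k - 1, by omega⟩
  obtain ⟨n', rfl⟩ : ∃ n', n = n' + 2 := ⟨n - 2, by omega⟩
  have hsub : n' + 2 - 1 = n' + 1 := rfl
  rw [hsub]
  rw [MvPolynomial.coeff_sub, MvPolynomial.coeff_smul, MvPolynomial.coeff_smul]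
  have h1 : MvPolynomial.coeff d
      (Matrix.trace ((Xmat (MvPolynomial ℕ ℝ) (n' + 2) MvPolynomial.X) ^ (m + 1)))
      = Stmt12Aux.tcsum m d (n' + 2) := Stmt12Aux.coeff_trace m d (n' + 2)
  have h2 : MvPolynomial.coeff d
      (Matrix.trace ((Xmat (MvPolynomial ℕ ℝ) (n' + 1) MvPolynomial.X) ^ (m + 1)))
      = Stmt12Aux.tcsum m d (n' + 1) := Stmt12Aux.coeff_trace m d (n' + 1)
  rw [h1, h2]
  have := Stmt12Aux.key m n' d
  simp only [smul_eq_mul]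
  push_cast at this ⊢
  linarith
end
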